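/- arXiv:1509.02106 — 6 statements merged into one kernel-verified Lean document; each statement's English description precedes it below -/
import Mathlib

section
/- Let f ∈ ℂ[x,y,z,w] be a reduced homogeneous polynomial defining a surface D: f = 0 in P³, and let ρ1, ρ2 be the chosen syzygies of degrees e1 ≤ e2. If the six 2×2 minors of the 2×4 matrix M(ρ1,ρ2) whose rows are the components of ρ1 and ρ2 have no common non-constant divisor in S (equivalently, the matrix has rank 2 at every point outside a closed subset of codimension ≥ 2 of ℂ⁴), then D is tame with respect to ρ1 and ρ2. -/
open MvPolynomial Matrix

noncomputable section

/-- The polynomial ring `S = ℂ[x,y,z,w]`. -/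
abbrev S4 : Type := MvPolynomial (Fin 4) ℂ

/-- The `S`-linear map sending `ρ = (α,β,γ,δ)` to `α fₓ + β f_y + γ f_z + δ f_w`. -/
def jacPair (f : S4) : (Fin 4 → S4) →ₗ[S4] S4 where
  toFun ρ := ∑ i, ρ i * pderiv i f
  map_add' a b := by simp [add_mul, Finset.sum_add_distrib]
  map_smul' c a := by simp [Finset.mul_sum, mul_assoc]

/-- `AR(f)`: the `S`-module of all Jacobian syzygies of `f`. -/
def AR4 (f : S4) : Submodule S4 (Fin 4 → S4) := LinearMap.ker (jacPair f)

/-- A vector of polynomials is homogeneous of degree `q` if each component is. -/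
def VecHomog (ρ : Fin 4 → S4) (q : ℕ) : Prop := ∀ i, (ρ i).IsHomogeneous q

/-- `AR(f)_k`, the degree-`k` homogeneous part of `AR(f)`, as a `ℂ`-subspace. -/
def ARgr (f : S4) (k : ℕ) : Submodule ℂ (Fin 4 → S4) :=
  (AR4 f).restrictScalars ℂ ⊓ Submodule.pi Set.univ (fun _ => homogeneousSubmodule (Fin 4) ℂ k)

/-- `ar(f)_k = dim_ℂ AR(f)_k`. -/
def arDim (f : S4) (k : ℕ) : ℕ := Module.finrank ℂ (ARgr f k)

/-- `ar(f)_q` for an integer index, with the convention that it vanishes for `q < 0`. -/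
def arZ (f : S4) (q : ℤ) : ℕ := if 0 ≤ q then arDim f q.toNat else 0

/-- The Jacobian ideal of `f`. -/
def JacIdeal (f : S4) : Ideal S4 := Ideal.span (Set.range fun i : Fin 4 => pderiv i f)

/-- `m(f)_k = dim_ℂ M(f)_k`, the dimension of the degree-`k` part of the Milnor algebra. -/
def milnor4 (f : S4) (k : ℕ) : ℕ :=
  Module.finrank ℂ ((homogeneousSubmodule (Fin 4) ℂ k).map
    (Submodule.mkQ ((JacIdeal f).restrictScalars ℂ)))

/-- `binom(m,3)` with the convention that it is `0` for `m < 3`. -/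
def binom3 (m : ℤ) : ℕ := m.toNat.choose 3

/-- All four `3×3` minors of the `3×4` matrix with rows `ρ1, ρ2, ρ` vanish. -/
def MinorsVanish3 (ρ1 ρ2 ρ : Fin 4 → S4) : Prop :=
  ∀ j : Fin 4,
    (Matrix.of fun i k => ![ρ1, ρ2, ρ] i (j.succAbove k) : Matrix (Fin 3) (Fin 3) S4).det = 0

/-- `D : f = 0` is tame with respect to `ρ1, ρ2`: every homogeneous syzygy `ρ` for which all
`3×3` minors of the matrix with rows `ρ1, ρ2, ρ` vanish lies in `S·ρ1 + S·ρ2`. -/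
def TamePair (f : S4) (ρ1 ρ2 : Fin 4 → S4) : Prop :=
  ∀ ρ ∈ AR4 f, ∀ q : ℕ, VecHomog ρ q → MinorsVanish3 ρ1 ρ2 ρ →
    ∃ a b : S4, ρ = a • ρ1 + b • ρ2

/-- `ρ1` is a nonzero homogeneous syzygy of minimal degree `e1`, and `ρ2` is a homogeneous
syzygy of minimal degree `e2 ≥ e1` among the homogeneous syzygies not in `S·ρ1`. -/
def MinimalPair (f : S4) (ρ1 ρ2 : Fin 4 → S4) (e1 e2 : ℕ) : Prop :=
  ρ1 ∈ AR4 f ∧ ρ1 ≠ 0 ∧ VecHomog ρ1 e1 ∧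
  (∀ ρ ∈ AR4 f, ∀ q : ℕ, ρ ≠ 0 → VecHomog ρ q → e1 ≤ q) ∧
  ρ2 ∈ AR4 f ∧ VecHomog ρ2 e2 ∧ e1 ≤ e2 ∧ (∀ a : S4, ρ2 ≠ a • ρ1) ∧
  (∀ ρ ∈ AR4 f, ∀ q : ℕ, VecHomog ρ q → (∀ a : S4, ρ ≠ a • ρ1) → e2 ≤ q)

/-- `D : f = 0` is a free surface with exponents `d1 ≤ d2 ≤ d3`: `AR(f)` is a free graded
`S`-module with a homogeneous basis of degrees `d1, d2, d3`. -/
def IsFreeWith (f : S4) (d1 d2 d3 : ℕ) : Prop :=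
  d1 ≤ d2 ∧ d2 ≤ d3 ∧
  ∃ ρ1 ρ2 ρ3 : Fin 4 → S4,
    ρ1 ∈ AR4 f ∧ ρ2 ∈ AR4 f ∧ ρ3 ∈ AR4 f ∧
    VecHomog ρ1 d1 ∧ VecHomog ρ2 d2 ∧ VecHomog ρ3 d3 ∧
    (∀ ρ ∈ AR4 f, ∃ a b c : S4, ρ = a • ρ1 + b • ρ2 + c • ρ3) ∧
    (∀ a b c : S4, a • ρ1 + b • ρ2 + c • ρ3 = 0 → a = 0 ∧ b = 0 ∧ c = 0)

/-- `D : f = 0` is a nearly free surface with exponents `d1 ≤ d2 ≤ d3` (`d4 = d3`):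
`AR(f)` is generated by four homogeneous syzygies of degrees `d1, d2, d3, d3`,
with `d3 = d - (d1 + d2)`, whose module of relations is generated by a single relation
`a₁ρ₁ + a₂ρ₂ + a₃ρ₃ + a₄ρ₄ = 0` with `a₁, a₂, a₃, a₄` homogeneous of degrees
`d3-d1+1, d3-d2+1, 1, 1`. -/
def IsNearlyFreeWith (f : S4) (d d1 d2 d3 : ℕ) : Prop :=
  d1 ≤ d2 ∧ d2 ≤ d3 ∧ d1 + d2 + d3 = d ∧
  ∃ (ρ : Fin 4 → Fin 4 → S4) (a : Fin 4 → S4),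
    (∀ i, ρ i ∈ AR4 f) ∧
    VecHomog (ρ 0) d1 ∧ VecHomog (ρ 1) d2 ∧ VecHomog (ρ 2) d3 ∧ VecHomog (ρ 3) d3 ∧
    (∀ σ ∈ AR4 f, ∃ b : Fin 4 → S4, σ = ∑ i, b i • ρ i) ∧
    (a 0).IsHomogeneous (d3 - d1 + 1) ∧ (a 1).IsHomogeneous (d3 - d2 + 1) ∧
    (a 2).IsHomogeneous 1 ∧ (a 3).IsHomogeneous 1 ∧
    a ≠ 0 ∧ (∑ i, a i • ρ i) = 0 ∧
    (∀ b : Fin 4 → S4, (∑ i, b i • ρ i) = 0 → ∃ c : S4, b = c • a)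

/-- `D : f = 0` is tame: it is tame with respect to some pair `ρ1, ρ2` chosen as in the paper. -/
def IsTame (f : S4) : Prop :=
  ∃ (ρ1 ρ2 : Fin 4 → S4) (e1 e2 : ℕ), MinimalPair f ρ1 ρ2 e1 e2 ∧ TamePair f ρ1 ρ2

/-- The `4×4` matrix with rows the Euler vector field `(x,y,z,w)` and `ρ1, ρ2, ρ`. -/
def EMat (ρ1 ρ2 ρ : Fin 4 → S4) : Matrix (Fin 4) (Fin 4) S4 :=
  Matrix.of ![fun i => X i, ρ1, ρ2, ρ]

set_option maxHeartbeats 1000000 in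
/-- Auxiliary: Cramer-type identity from vanishing 3×3 minors. -/
lemma keyMul_aux (ρ1 ρ2 ρ : Fin 4 → S4) (hmv : MinorsVanish3 ρ1 ρ2 ρ)
    (hne : ∃ i j : Fin 4, ρ1 i * ρ2 j - ρ1 j * ρ2 i ≠ 0) :
    ∃ M A B : S4, M ≠ 0 ∧ ∀ k, M * ρ k = A * ρ1 k + B * ρ2 k := by
  have E0 : ρ1 1 * ρ2 2 * ρ 3 - ρ1 1 * ρ2 3 * ρ 2 - ρ1 2 * ρ2 1 * ρ 3
      + ρ1 2 * ρ2 3 * ρ 1 + ρ1 3 * ρ2 1 * ρ 2 - ρ1 3 * ρ2 2 * ρ 1 = 0 := by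
    have := hmv 0; simp [Matrix.det_fin_three] at this; convert this using 3
  have E1 : ρ1 0 * ρ2 2 * ρ 3 - ρ1 0 * ρ2 3 * ρ 2 - ρ1 2 * ρ2 0 * ρ 3
      + ρ1 2 * ρ2 3 * ρ 0 + ρ1 3 * ρ2 0 * ρ 2 - ρ1 3 * ρ2 2 * ρ 0 = 0 := by
    have := hmv 1; simp [Matrix.det_fin_three] at this; convert this using 3 <;> rfl
  have E2 : ρ1 0 * ρ2 1 * ρ 3 - ρ1 0 * ρ2 3 * ρ 1 - ρ1 1 * ρ2 0 * ρ 3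
      + ρ1 1 * ρ2 3 * ρ 0 + ρ1 3 * ρ2 0 * ρ 1 - ρ1 3 * ρ2 1 * ρ 0 = 0 := by
    have := hmv 2; simp [Matrix.det_fin_three] at this; convert this using 3 <;> rfl
  have E3 : ρ1 0 * ρ2 1 * ρ 2 - ρ1 0 * ρ2 2 * ρ 1 - ρ1 1 * ρ2 0 * ρ 2
      + ρ1 1 * ρ2 2 * ρ 0 + ρ1 2 * ρ2 0 * ρ 1 - ρ1 2 * ρ2 1 * ρ 0 = 0 := by
    have := hmv 3; simp [Matrix.det_fin_three] at this; convert this using 3 <;> rfl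
  clear hmv
  have F0 : ∀ h : 0 < 4, (⟨0, h⟩ : Fin 4) = 0 := fun _ => rfl
  have F1 : ∀ h : 1 < 4, (⟨1, h⟩ : Fin 4) = 1 := fun _ => rfl
  have F2 : ∀ h : 2 < 4, (⟨2, h⟩ : Fin 4) = 2 := fun _ => rfl
  have F3 : ∀ h : 3 < 4, (⟨3, h⟩ : Fin 4) = 3 := fun _ => rfl
  obtain ⟨i, j, hne⟩ := hne
  refine ⟨ρ1 i * ρ2 j - ρ1 j * ρ2 i, ρ i * ρ2 j - ρ j * ρ2 i,
    ρ1 i * ρ j - ρ1 j * ρ i, hne, fun k => ?_⟩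
  fin_cases i <;> fin_cases j <;> fin_cases k
  · simp only [F0, F1, F2, F3] at hne ⊢
    exact absurd (sub_self _) hne
  · simp only [F0, F1, F2, F3] at hne ⊢
    exact absurd (sub_self _) hne
  · simp only [F0, F1, F2, F3] at hne ⊢
    exact absurd (sub_self _) hne
  · simp only [F0, F1, F2, F3] at hne ⊢
    exact absurd (sub_self _) hne
  · simp only [F0, F1, F2, F3] at hne ⊢
    ring
  · simp only [F0, F1, F2, F3] at hne ⊢
    ring
  · simp only [F0, F1, F2, F3] at hne ⊢
    first
      | linear_combination E3
      | linear_combination -E3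
  · simp only [F0, F1, F2, F3] at hne ⊢
    first
      | linear_combination E2
      | linear_combination -E2
  · simp only [F0, F1, F2, F3] at hne ⊢
    ring
  · simp only [F0, F1, F2, F3] at hne ⊢
    first
      | linear_combination E3
      | linear_combination -E3
  · simp only [F0, F1, F2, F3] at hne ⊢
    ring
  · simp only [F0, F1, F2, F3] at hne ⊢
    first
      | linear_combination E1
      | linear_combination -E1
  · simp only [F0, F1, F2, F3] at hne ⊢
    ring
  · simp only [F0, F1, F2, F3] at hne ⊢
    first
      | linear_combination E2
      | linear_combination -E2
  · simp only [F0, F1, F2, F3] at hne ⊢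
    first
      | linear_combination E1
      | linear_combination -E1
  · simp only [F0, F1, F2, F3] at hne ⊢
    ring
  · simp only [F0, F1, F2, F3] at hne ⊢
    ring
  · simp only [F0, F1, F2, F3] at hne ⊢
    ring
  · simp only [F0, F1, F2, F3] at hne ⊢
    first
      | linear_combination E3
      | linear_combination -E3
  · simp only [F0, F1, F2, F3] at hne ⊢
    first
      | linear_combination E2
      | linear_combination -E2
  · simp only [F0, F1, F2, F3] at hne ⊢
    exact absurd (sub_self _) hne
  · simp only [F0, F1, F2, F3] at hne ⊢
    exact absurd (sub_self _) hne
  · simp only [F0, F1, F2, F3] at hne ⊢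
    exact absurd (sub_self _) hne
  · simp only [F0, F1, F2, F3] at hne ⊢
    exact absurd (sub_self _) hne
  · simp only [F0, F1, F2, F3] at hne ⊢
    first
      | linear_combination E3
      | linear_combination -E3
  · simp only [F0, F1, F2, F3] at hne ⊢
    ring
  · simp only [F0, F1, F2, F3] at hne ⊢
    ring
  · simp only [F0, F1, F2, F3] at hne ⊢
    first
      | linear_combination E0
      | linear_combination -E0
  · simp only [F0, F1, F2, F3] at hne ⊢
    first
      | linear_combination E2
      | linear_combination -E2
  · simp only [F0, F1, F2, F3] at hne ⊢
    ring
  · simp only [F0, F1, F2, F3] at hne ⊢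
    first
      | linear_combination E0
      | linear_combination -E0
  · simp only [F0, F1, F2, F3] at hne ⊢
    ring
  · simp only [F0, F1, F2, F3] at hne ⊢
    ring
  · simp only [F0, F1, F2, F3] at hne ⊢
    first
      | linear_combination E3
      | linear_combination -E3
  · simp only [F0, F1, F2, F3] at hne ⊢
    ring
  · simp only [F0, F1, F2, F3] at hne ⊢
    first
      | linear_combination E1
      | linear_combination -E1
  · simp only [F0, F1, F2, F3] at hne ⊢
    first
      | linear_combination E3
      | linear_combination -E3
  · simp only [F0, F1, F2, F3] at hne ⊢
    ring
  · simp only [F0, F1, F2, F3] at hne ⊢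
    ring
  · simp only [F0, F1, F2, F3] at hne ⊢
    first
      | linear_combination E0
      | linear_combination -E0
  · simp only [F0, F1, F2, F3] at hne ⊢
    exact absurd (sub_self _) hne
  · simp only [F0, F1, F2, F3] at hne ⊢
    exact absurd (sub_self _) hne
  · simp only [F0, F1, F2, F3] at hne ⊢
    exact absurd (sub_self _) hne
  · simp only [F0, F1, F2, F3] at hne ⊢
    exact absurd (sub_self _) hne
  · simp only [F0, F1, F2, F3] at hne ⊢
    first
      | linear_combination E1
      | linear_combination -E1
  · simp only [F0, F1, F2, F3] at hne ⊢
    first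
      | linear_combination E0
      | linear_combination -E0
  · simp only [F0, F1, F2, F3] at hne ⊢
    ring
  · simp only [F0, F1, F2, F3] at hne ⊢
    ring
  · simp only [F0, F1, F2, F3] at hne ⊢
    ring
  · simp only [F0, F1, F2, F3] at hne ⊢
    first
      | linear_combination E2
      | linear_combination -E2
  · simp only [F0, F1, F2, F3] at hne ⊢
    first
      | linear_combination E1
      | linear_combination -E1
  · simp only [F0, F1, F2, F3] at hne ⊢
    ring
  · simp only [F0, F1, F2, F3] at hne ⊢
    first
      | linear_combination E2
      | linear_combination -E2
  · simp only [F0, F1, F2, F3] at hne ⊢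
    ring
  · simp only [F0, F1, F2, F3] at hne ⊢
    first
      | linear_combination E0
      | linear_combination -E0
  · simp only [F0, F1, F2, F3] at hne ⊢
    ring
  · simp only [F0, F1, F2, F3] at hne ⊢
    first
      | linear_combination E1
      | linear_combination -E1
  · simp only [F0, F1, F2, F3] at hne ⊢
    first
      | linear_combination E0
      | linear_combination -E0
  · simp only [F0, F1, F2, F3] at hne ⊢
    ring
  · simp only [F0, F1, F2, F3] at hne ⊢
    ring
  · simp only [F0, F1, F2, F3] at hne ⊢
    exact absurd (sub_self _) hne
  · simp only [F0, F1, F2, F3] at hne ⊢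
    exact absurd (sub_self _) hne
  · simp only [F0, F1, F2, F3] at hne ⊢
    exact absurd (sub_self _) hne
  · simp only [F0, F1, F2, F3] at hne ⊢
    exact absurd (sub_self _) hne

/-- **Lemma 2.5 (ii).** If the six `2×2` minors of the matrix with rows `ρ1, ρ2` have no
common non-constant divisor, then `D : f = 0` is tame with respect to `ρ1, ρ2`. -/
theorem lem_2_5_ii (f : S4) (d e1 e2 : ℕ) (ρ1 ρ2 : Fin 4 → S4)
    (hd : 1 ≤ d) (hf : f.IsHomogeneous d) (hred : Squarefree f)
    (hmin : MinimalPair f ρ1 ρ2 e1 e2)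
    (hminors : ∀ c : S4, (∀ i j : Fin 4, c ∣ (ρ1 i * ρ2 j - ρ1 j * ρ2 i)) → IsUnit c) :
    TamePair f ρ1 ρ2 := by
  intro ρ hρ q hhom hmv
  -- Step 0: some 2×2 minor of (ρ1, ρ2) is nonzero.
  have hex : ∃ i j : Fin 4, ρ1 i * ρ2 j - ρ1 j * ρ2 i ≠ 0 := by
    by_contra hc
    push_neg at hc
    have hu := hminors (X 0) (fun i j => by rw [hc i j]; exact dvd_zero _)
    have := hu.map (constantCoeff (σ := Fin 4) (R := ℂ))
    simp at this
  obtain ⟨M, A, B, hM, hkey⟩ := keyMul_aux ρ1 ρ2 ρ hmv hex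
  clear hex hmv hρ hhom
  -- Main claim by induction on factorizations of M.
  suffices h : ∀ M : S4, M ≠ 0 → ∀ A B : S4,
      (∀ k, M * ρ k = A * ρ1 k + B * ρ2 k) → ∃ a b : S4, ρ = a • ρ1 + b • ρ2 by
    exact h M hM A B hkey
  clear hM hkey M A B
  intro M
  induction M using WfDvdMonoid.induction_on_irreducible with
  | zero => exact fun h => absurd rfl h
  | unit u hu =>
    intro _ A B hk
    obtain ⟨v, hv⟩ := hu.exists_left_inv
    refine ⟨v * A, v * B, funext fun k => ?_⟩
    simp only [Pi.add_apply, Pi.smul_apply, smul_eq_mul]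
    linear_combination v * hk k - ρ k * hv
  | mul a π ha hπ ih =>
    intro _ A B hk
    have hp : Prime π := UniqueFactorizationMonoid.irreducible_iff_prime.mp hπ
    obtain ⟨i, j, hm⟩ : ∃ i j : Fin 4, ¬ π ∣ (ρ1 i * ρ2 j - ρ1 j * ρ2 i) := by
      by_contra hc
      push_neg at hc
      exact hp.not_unit (hminors π hc)
    have hB : π ∣ B := by
      have hd : π ∣ B * (ρ1 i * ρ2 j - ρ1 j * ρ2 i) :=
        ⟨a * (ρ1 i * ρ j - ρ1 j * ρ i), by linear_combination ρ1 j * hk i - ρ1 i * hk j⟩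
      exact (hp.dvd_or_dvd hd).resolve_right hm
    have hA : π ∣ A := by
      have hd : π ∣ A * (ρ1 i * ρ2 j - ρ1 j * ρ2 i) :=
        ⟨a * (ρ2 j * ρ i - ρ2 i * ρ j), by linear_combination ρ2 i * hk j - ρ2 j * hk i⟩
      exact (hp.dvd_or_dvd hd).resolve_right hm
    obtain ⟨A', hA'⟩ := hA
    obtain ⟨B', hB'⟩ := hB
    refine ih ha A' B' fun k => ?_
    have hπ0 : π ≠ 0 := hp.ne_zero
    apply mul_left_cancel₀ hπ0
    linear_combination hk k + ρ1 k * hA' + ρ2 k * hB'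
end
end

section
/- Let f ∈ ℂ[x,y,z,w] be a reduced homogeneous polynomial defining a surface D: f = 0 in P³, and let ρ1, ρ2 be the chosen syzygies of degrees e1 ≤ e2. Then D is NOT tame with respect to ρ1 and ρ2 if and only if there exist a primitive homogeneous syzygy ρ ∈ AR(f) (i.e., ρ is not a non-constant polynomial multiple of another syzygy) and homogeneous polynomials c, c1, c2 ∈ S with deg c > 0 and c1, c2 relatively prime, such that c·ρ = c1·ρ1 + c2·ρ2 in S⁴. -/
open MvPolynomial Matrix

noncomputable section

/-- The substitution `Xᵢ ↦ Xᵢ·T` into `Polynomial S4`. -/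
def phiH : S4 →ₐ[ℂ] Polynomial S4 :=
  aeval (fun i => Polynomial.C (X i) * Polynomial.X)

lemma phiH_monomial (d : Fin 4 →₀ ℕ) (r : ℂ) :
    phiH (monomial d r) = Polynomial.C (monomial d r) * Polynomial.X ^ d.degree := by
  rw [monomial_eq, Finsupp.degree]
  simp only [phiH, _root_.map_mul, aeval_C, Finsupp.prod, map_prod, map_pow, aeval_X,
    mul_pow, Finset.prod_mul_distrib, ← Polynomial.C_pow, ← map_prod,
    Finset.prod_pow_eq_pow_sum, Polynomial.algebraMap_apply, MvPolynomial.algebraMap_eq]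
  rw [map_prod]
  simp only [map_pow, aeval_X, mul_pow]
  rw [Finset.prod_mul_distrib]
  simp only [← Polynomial.C_pow]
  rw [← map_prod, Finset.prod_pow_eq_pow_sum, mul_assoc]
  rfl

lemma phiH_coeff (p : S4) (k : ℕ) :
    (phiH p).coeff k = homogeneousComponent k p := by
  conv_lhs => rw [p.as_sum]
  rw [map_sum, Polynomial.finset_sum_coeff]
  rw [homogeneousComponent_apply, Finset.sum_filter]
  refine Finset.sum_congr rfl fun d _ => ?_
  rw [phiH_monomial, Polynomial.coeff_C_mul, Polynomial.coeff_X_pow]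
  by_cases h : d.degree = k
  · simp [h]
  · simp only [h, if_false]
    rw [if_neg (fun hk => h hk.symm), mul_zero]

lemma phiH_ne_zero {p : S4} (hp : p ≠ 0) : phiH p ≠ 0 := by
  intro h
  apply hp
  have := sum_homogeneousComponent p
  rw [← this]
  refine Finset.sum_eq_zero fun i _ => ?_
  rw [← phiH_coeff, h, Polynomial.coeff_zero]

lemma isHomogeneous_iff_phiH (p : S4) (n : ℕ) :
    p.IsHomogeneous n ↔ ∀ k, k ≠ n → (phiH p).coeff k = 0 := by
  constructor
  · intro hp k hk
    rw [phiH_coeff, homogeneousComponent_of_mem hp, if_neg hk]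
  · intro h
    have hdec := sum_homogeneousComponent p
    by_cases hn : n < p.totalDegree + 1
    · have hp : p = homogeneousComponent n p := by
        conv_lhs => rw [← hdec]
        rw [Finset.sum_eq_single_of_mem n (Finset.mem_range.2 hn)]
        intro b _ hb
        rw [← phiH_coeff, h b hb]
      rw [hp]
      exact homogeneousComponent_isHomogeneous n p
    · have hp : p = 0 := by
        conv_lhs => rw [← hdec]
        refine Finset.sum_eq_zero fun i hi => ?_
        rw [← phiH_coeff]
        refine h i ?_
        simp only [Finset.mem_range] at hi
        omega
      rw [hp]
      exact isHomogeneous_zero _ _ n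

/-- Factors of a nonzero homogeneous polynomial are homogeneous. -/
lemma homog_of_mul {p q : S4} {n : ℕ} (h : (p * q).IsHomogeneous n) (h0 : p * q ≠ 0) :
    ∃ a b : ℕ, a + b = n ∧ p.IsHomogeneous a ∧ q.IsHomogeneous b := by
  have hp : p ≠ 0 := left_ne_zero_of_mul h0
  have hq : q ≠ 0 := right_ne_zero_of_mul h0
  have hP : phiH p ≠ 0 := phiH_ne_zero hp
  have hQ : phiH q ≠ 0 := phiH_ne_zero hq
  have hPQ : phiH (p * q) = phiH p * phiH q := map_mul _ _ _
  have hmono : ∀ k, k ≠ n → (phiH (p*q)).coeff k = 0 := (isHomogeneous_iff_phiH _ n).1 h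
  -- natDegree and natTrailingDegree of phiH (p*q) both equal n
  have hne : phiH (p*q) ≠ 0 := phiH_ne_zero h0
  have hdeg : (phiH (p*q)).natDegree = n := by
    have h1 : (phiH (p*q)).natDegree ≤ n := by
      apply Polynomial.natDegree_le_iff_coeff_eq_zero.2
      intro k hk; exact hmono k (by omega)
    rcases lt_or_eq_of_le h1 with h2 | h2
    · exfalso
      apply hne
      apply Polynomial.ext
      intro k
      rcases eq_or_ne k n with rfl | hk
      · exact (Polynomial.coeff_eq_zero_of_natDegree_lt h2).trans rfl
      · exact hmono k hk
    · exact h2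
  have htdeg : (phiH (p*q)).natTrailingDegree = n := by
    have h1 : n ≤ (phiH (p*q)).natTrailingDegree := by
      apply Polynomial.le_natTrailingDegree hne
      intro k hk; exact hmono k (by omega)
    have h2 := Polynomial.natTrailingDegree_le_natDegree (phiH (p*q))
    omega
  have hd : (phiH p).natDegree + (phiH q).natDegree = n := by
    rw [← hdeg, hPQ, Polynomial.natDegree_mul hP hQ]
  have ht : (phiH p).natTrailingDegree + (phiH q).natTrailingDegree = n := by
    rw [← htdeg, hPQ, Polynomial.natTrailingDegree_mul hP hQ]
  have e1 := Polynomial.natTrailingDegree_le_natDegree (phiH p)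
  have e2 := Polynomial.natTrailingDegree_le_natDegree (phiH q)
  refine ⟨(phiH p).natDegree, (phiH q).natDegree, hd, ?_, ?_⟩
  · rw [isHomogeneous_iff_phiH]
    intro k hk
    rcases lt_or_gt_of_ne hk with h' | h'
    · exact Polynomial.coeff_eq_zero_of_lt_natTrailingDegree (by omega)
    · exact Polynomial.coeff_eq_zero_of_natDegree_lt h'
  · rw [isHomogeneous_iff_phiH]
    intro k hk
    rcases lt_or_gt_of_ne hk with h' | h'
    · exact Polynomial.coeff_eq_zero_of_lt_natTrailingDegree (by omega)
    · exact Polynomial.coeff_eq_zero_of_natDegree_lt h'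


lemma homog_zero_eq_C {p : S4} (h : p.IsHomogeneous 0) : ∃ z : ℂ, p = C z := by
  refine ⟨coeff 0 p, ?_⟩
  have h1 := homogeneousComponent_of_mem (m := 0) ((mem_homogeneousSubmodule 0 p).2 h)
  rw [if_pos rfl] at h1
  conv_lhs => rw [← h1]
  rw [homogeneousComponent_zero]

lemma isUnit_of_homog_zero {p : S4} (h : p.IsHomogeneous 0) (h0 : p ≠ 0) : IsUnit p := by
  obtain ⟨z, rfl⟩ := homog_zero_eq_C h
  have hz : z ≠ 0 := fun hz => h0 (by rw [hz, map_zero])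
  exact (isUnit_iff_ne_zero.2 hz).map (C : ℂ →+* S4)

lemma not_isUnit_of_homog {c : S4} {q : ℕ} (hc : c.IsHomogeneous q) (h0 : c ≠ 0)
    (hq : 0 < q) : ¬ IsUnit c := by
  intro hu
  obtain ⟨v, hv⟩ := hu.exists_right_inv
  have h1 : ((c * v)).IsHomogeneous 0 := by rw [hv]; exact isHomogeneous_one _ _
  have h0' : c * v ≠ 0 := by rw [hv]; exact one_ne_zero
  obtain ⟨a, b, hab, hca, _⟩ := homog_of_mul h1 h0'
  have : a = q := hca.inj_right hc h0
  omega

lemma homog_pos_of_not_isUnit {c : S4} {q : ℕ} (hc : c.IsHomogeneous q) (h0 : c ≠ 0)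
    (hnu : ¬ IsUnit c) : 0 < q := by
  rcases Nat.eq_zero_or_pos q with rfl | h
  · exact absurd (isUnit_of_homog_zero hc h0) hnu
  · exact h

lemma AR4_of_smul_mem {f : S4} {p : S4} (hp : p ≠ 0) {τ : Fin 4 → S4}
    (h : p • τ ∈ AR4 f) : τ ∈ AR4 f := by
  rw [AR4, LinearMap.mem_ker] at *
  rw [LinearMap.map_smul, smul_eq_mul] at h
  exact (mul_eq_zero.mp h).resolve_left hp

lemma vecHomog_of_smul {p : S4} {τ : Fin 4 → S4} {e m : ℕ} (hp : p ≠ 0)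
    (hpm : p.IsHomogeneous m) (h : VecHomog (p • τ) e) : VecHomog τ (e - m) := by
  intro i
  rcases eq_or_ne (τ i) 0 with h0 | h0
  · rw [h0]; exact isHomogeneous_zero _ _ _
  · have hne : p * τ i ≠ 0 := mul_ne_zero hp h0
    have := h i
    rw [Pi.smul_apply, smul_eq_mul] at this
    obtain ⟨a, b, hab, hpa, htb⟩ := homog_of_mul this hne
    have ha : a = m := hpa.inj_right hpm hp
    have hb : b = e - m := by omega
    rwa [hb] at htb

lemma smul_deg_le {p : S4} {τ : Fin 4 → S4} {e : ℕ} (hp : p ≠ 0) (hτ : τ ≠ 0)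
    (h : VecHomog (p • τ) e) : ∃ m : ℕ, p.IsHomogeneous m ∧ m ≤ e := by
  obtain ⟨i, hi⟩ := Function.ne_iff.mp hτ
  simp only [Pi.zero_apply] at hi
  have hne : p * τ i ≠ 0 := mul_ne_zero hp hi
  have := h i
  rw [Pi.smul_apply, smul_eq_mul] at this
  obtain ⟨a, b, hab, hpa, _⟩ := homog_of_mul this hne
  exact ⟨a, hpa, by omega⟩

/-- If `a • ρ1 = b • σ` with `b ≠ 0` and `σ` a syzygy, and `ρ1` a minimal-degree syzygy,
then `σ` is a polynomial multiple of `ρ1`. -/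
lemma prop_of_smul_eq (f : S4) (e1 : ℕ) (ρ1 : Fin 4 → S4)
    (h1 : ρ1 ∈ AR4 f) (h1ne : ρ1 ≠ 0) (h1h : VecHomog ρ1 e1)
    (hmin : ∀ ρ ∈ AR4 f, ∀ q : ℕ, ρ ≠ 0 → VecHomog ρ q → e1 ≤ q)
    (a b : S4) (hb : b ≠ 0) (σ : Fin 4 → S4) (hσ : σ ∈ AR4 f)
    (heq : a • ρ1 = b • σ) : ∃ t : S4, σ = t • ρ1 := by
  rcases eq_or_ne a 0 with rfl | ha
  · refine ⟨0, ?_⟩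
    rw [zero_smul] at heq ⊢
    funext i
    have := congrFun heq.symm i
    rw [Pi.smul_apply, smul_eq_mul, Pi.zero_apply] at this
    exact (mul_eq_zero.mp this).resolve_left hb
  · obtain ⟨a', b', g, hcop, hga, hgb⟩ :=
      UniqueFactorizationMonoid.exists_reduced_factors a ha b
    have hg : g ≠ 0 := fun h => ha (by rw [← hga, h, zero_mul])
    have hb' : b' ≠ 0 := fun h => hb (by rw [← hgb, h, mul_zero])
    have hcomp : ∀ i, a' * ρ1 i = b' * σ i := by
      intro i
      have := congrFun heq i
      rw [Pi.smul_apply, Pi.smul_apply, smul_eq_mul, smul_eq_mul, ← hga, ← hgb] at this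
      rw [mul_assoc, mul_assoc] at this
      exact mul_left_cancel₀ hg this
    have hdvd : ∀ i, b' ∣ ρ1 i := by
      intro i
      exact (hcop.symm).dvd_of_dvd_mul_left ⟨σ i, hcomp i⟩
    choose τ hτ using hdvd
    have hρ1τ : ρ1 = b' • τ := by funext i; rw [Pi.smul_apply, smul_eq_mul]; exact hτ i
    have hτne : τ ≠ 0 := by
      intro h
      exact h1ne (by rw [hρ1τ, h, smul_zero])
    obtain ⟨m, hbm, hme⟩ := smul_deg_le hb' hτne (hρ1τ ▸ h1h)
    have hτAR : τ ∈ AR4 f := AR4_of_smul_mem hb' (hρ1τ ▸ h1)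
    have hτh : VecHomog τ (e1 - m) := vecHomog_of_smul hb' hbm (hρ1τ ▸ h1h)
    have hm0 : m = 0 := by
      have := hmin τ hτAR (e1 - m) hτne hτh
      omega
    obtain ⟨z, rfl⟩ := homog_zero_eq_C (hm0 ▸ hbm)
    have hz : z ≠ 0 := fun h => hb' (by rw [h, map_zero])
    refine ⟨C z⁻¹ * a', ?_⟩
    funext i
    rw [Pi.smul_apply, smul_eq_mul]
    apply mul_left_cancel₀ (show (C z : S4) ≠ 0 from hb')
    rw [← hcomp i, ← mul_assoc, ← mul_assoc, ← _root_.map_mul, mul_inv_cancel₀ hz, MvPolynomial.C_1,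
    one_mul]

/-- `ρ1` and `ρ2` are linearly independent over `S`. -/
lemma indep_pair (f : S4) (e1 e2 : ℕ) (ρ1 ρ2 : Fin 4 → S4)
    (hmin : MinimalPair f ρ1 ρ2 e1 e2) :
    ∀ a b : S4, a • ρ1 + b • ρ2 = 0 → a = 0 ∧ b = 0 := by
  obtain ⟨h1AR, h1ne, h1h, h1min, h2AR, h2h, h12, h2notmul, h2min⟩ := hmin
  intro a b hab
  have hb : b = 0 := by
    by_contra hb
    have heq : a • ρ1 = (-b) • ρ2 := by
      rw [neg_smul]
      exact eq_neg_of_add_eq_zero_left hab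
    obtain ⟨t, ht⟩ := prop_of_smul_eq f e1 ρ1 h1AR h1ne h1h h1min a (-b) (neg_ne_zero.2 hb)
      ρ2 h2AR heq
    exact h2notmul t ht
  subst hb
  rw [zero_smul, add_zero] at hab
  refine ⟨?_, rfl⟩
  obtain ⟨i, hi⟩ := Function.ne_iff.mp h1ne
  simp only [Pi.zero_apply] at hi
  have := congrFun hab i
  rw [Pi.smul_apply, smul_eq_mul, Pi.zero_apply] at this
  exact (mul_eq_zero.mp this).resolve_right hi

set_option maxHeartbeats 3200000 in
/-- Determinant-vanishing for all (ordered) triples of columns. -/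
lemma minors_T (ρ1 ρ2 ρ : Fin 4 → S4) (h : MinorsVanish3 ρ1 ρ2 ρ) (j k m : Fin 4) :
    ρ1 j * ρ2 k * ρ m - ρ1 j * ρ2 m * ρ k - ρ1 k * ρ2 j * ρ m + ρ1 k * ρ2 m * ρ j
      + ρ1 m * ρ2 j * ρ k - ρ1 m * ρ2 k * ρ j = 0 := by
  have h0 := h 0
  have h1 := h 1
  have h2 := h 2
  have h3 := h 3
  simp [Matrix.det_fin_three, Fin.succAbove, Matrix.cons_val_zero, Matrix.cons_val_one,
    show ¬((2:Fin 3).castSucc < (2:Fin 4)) from by decide,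
    show ((2:Fin 3).castSucc < (3:Fin 4)) from by decide,
    show (Fin.succ 2 : Fin 4) = 3 from rfl,
    show ((2:Fin 3).castSucc : Fin 4) = 2 from rfl] at h0 h1 h2 h3
  fin_cases j <;> fin_cases k <;> fin_cases m <;>
    simp only [show ∀ (h : 0 < 4), (⟨0,h⟩:Fin 4) = 0 from fun _ => rfl,
      show ∀ (h : 1 < 4), (⟨1,h⟩:Fin 4) = 1 from fun _ => rfl,
      show ∀ (h : 2 < 4), (⟨2,h⟩:Fin 4) = 2 from fun _ => rfl,
      show ∀ (h : 3 < 4), (⟨3,h⟩:Fin 4) = 3 from fun _ => rfl] <;>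
    first
      | ring1
      | linear_combination h0
      | linear_combination -h0
      | linear_combination h1
      | linear_combination -h1
      | linear_combination h2
      | linear_combination -h2
      | linear_combination h3
      | linear_combination -h3

lemma minors_comp (ρ1 ρ2 ρ : Fin 4 → S4) (h : MinorsVanish3 ρ1 ρ2 ρ) (j k m : Fin 4) :
    (ρ1 j * ρ2 k - ρ1 k * ρ2 j) * ρ m
      = (ρ2 k * ρ j - ρ2 j * ρ k) * ρ1 m + (ρ1 j * ρ k - ρ1 k * ρ j) * ρ2 m := by
  linear_combination minors_T ρ1 ρ2 ρ h j k m

/-- A syzygy which is a combination over the fraction field of `ρ1, ρ2` has all `3×3`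
minors vanishing. -/
lemma minorsVanish_of_comb (ρ1 ρ2 ρ : Fin 4 → S4) (c c1 c2 : S4) (hc0 : c ≠ 0)
    (hcomp : ∀ i, c * ρ i = c1 * ρ1 i + c2 * ρ2 i) : MinorsVanish3 ρ1 ρ2 ρ := by
  have key : ∀ a b d : Fin 4,
      ρ1 a * ρ2 b * ρ d - ρ1 a * ρ2 d * ρ b - ρ1 b * ρ2 a * ρ d + ρ1 b * ρ2 d * ρ a
        + ρ1 d * ρ2 a * ρ b - ρ1 d * ρ2 b * ρ a = 0 := by
    intro a b d
    apply mul_left_cancel₀ hc0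
    rw [mul_zero]
    linear_combination (ρ1 b * ρ2 d - ρ1 d * ρ2 b) * hcomp a
      + (ρ1 d * ρ2 a - ρ1 a * ρ2 d) * hcomp b
      + (ρ1 a * ρ2 b - ρ1 b * ρ2 a) * hcomp d
  intro j
  fin_cases j <;>
    simp [Matrix.det_fin_three, Fin.succAbove, Matrix.cons_val_zero, Matrix.cons_val_one,
      show ¬((2:Fin 3).castSucc < (2:Fin 4)) from by decide,
      show ((2:Fin 3).castSucc < (3:Fin 4)) from by decide,
      show (Fin.succ 2 : Fin 4) = 3 from rfl,
      show ((2:Fin 3).castSucc : Fin 4) = 2 from rfl,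
      show ∀ (h : 0 < 4), (⟨0,h⟩:Fin 4) = 0 from fun _ => rfl,
      show ∀ (h : 1 < 4), (⟨1,h⟩:Fin 4) = 1 from fun _ => rfl,
      show ∀ (h : 2 < 4), (⟨2,h⟩:Fin 4) = 2 from fun _ => rfl,
      show ∀ (h : 3 < 4), (⟨3,h⟩:Fin 4) = 3 from fun _ => rfl]
  · linear_combination key 1 2 3
  · linear_combination key 0 2 3
  · linear_combination key 0 1 3
  · linear_combination key 0 1 2

/-- Some `2×2` minor of the pair `ρ1, ρ2` is nonzero. -/
lemma exists_minor2 (f : S4) (e1 e2 : ℕ) (ρ1 ρ2 : Fin 4 → S4)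
    (hmin : MinimalPair f ρ1 ρ2 e1 e2) :
    ∃ j k : Fin 4, ρ1 j * ρ2 k - ρ1 k * ρ2 j ≠ 0 := by
  by_contra hcon
  push_neg at hcon
  obtain ⟨h1AR, h1ne, h1h, h1min, h2AR, h2h, h12, h2notmul, h2min⟩ := hmin
  obtain ⟨j, hj⟩ := Function.ne_iff.mp h1ne
  simp only [Pi.zero_apply] at hj
  have heq : (ρ2 j) • ρ1 = (ρ1 j) • ρ2 := by
    funext k
    simp only [Pi.smul_apply, smul_eq_mul]
    linear_combination -hcon j k
  obtain ⟨t, ht⟩ := prop_of_smul_eq f e1 ρ1 h1AR h1ne h1h h1min (ρ2 j) (ρ1 j) hj ρ2 h2AR heq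
  exact h2notmul t ht

lemma homog_div {a b c : S4} {n m : ℕ} (h : a = b * c) (ha : a.IsHomogeneous n)
    (hb : b.IsHomogeneous m) (hb0 : b ≠ 0) : c.IsHomogeneous (n - m) := by
  rcases eq_or_ne c 0 with rfl | hc0
  · exact isHomogeneous_zero _ _ _
  · rw [h] at ha
    obtain ⟨x, y, hxy, hbx, hcy⟩ := homog_of_mul ha (mul_ne_zero hb0 hc0)
    have hxm : x = m := hbx.inj_right hb hb0
    have hy : y = n - m := by omega
    exact hy ▸ hcy

/-- The inductive reduction: any fraction-field relation between a homogeneous syzygy not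
in `S·ρ1 + S·ρ2` and the pair `ρ1, ρ2` can be reduced to one with `ρ` primitive and
`c1, c2` coprime. -/
lemma reduce (f : S4) (ρ1 ρ2 : Fin 4 → S4) (e1 e2 : ℕ) (hmin : MinimalPair f ρ1 ρ2 e1 e2) :
    ∀ N : ℕ, ∀ (e q q1 q2 : ℕ) (ρ : Fin 4 → S4) (c c1 c2 : S4),
      q1 + q2 + e ≤ N →
      ρ ∈ AR4 f → VecHomog ρ e → (∀ a b : S4, ρ ≠ a • ρ1 + b • ρ2) →
      c ≠ 0 → c.IsHomogeneous q → c1.IsHomogeneous q1 → c2.IsHomogeneous q2 →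
      c • ρ = c1 • ρ1 + c2 • ρ2 →
      ∃ (ρ : Fin 4 → S4) (e : ℕ) (c c1 c2 : S4) (q q1 q2 : ℕ),
        ρ ∈ AR4 f ∧ VecHomog ρ e ∧
        (∀ (u : S4) (ρ' : Fin 4 → S4), ρ' ∈ AR4 f → ρ = u • ρ' → ∃ z : ℂ, u = C z) ∧
        c.IsHomogeneous q ∧ c ≠ 0 ∧ 0 < q ∧
        c1.IsHomogeneous q1 ∧ c2.IsHomogeneous q2 ∧
        (∀ u : S4, u ∣ c1 → u ∣ c2 → IsUnit u) ∧
        c • ρ = c1 • ρ1 + c2 • ρ2 := by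
  intro N
  induction N using Nat.strong_induction_on with
  | _ N IH =>
  intro e q q1 q2 ρ c c1 c2 hN hAR hhom hnspan hc0 hcq hc1h hc2h heqn
  have hρ0 : ρ ≠ 0 := by
    intro h
    exact hnspan 0 0 (by rw [h]; simp)
  have hcomp : ∀ i, c * ρ i = c1 * ρ1 i + c2 * ρ2 i := by
    intro i
    have := congrFun heqn i
    simpa [Pi.smul_apply, smul_eq_mul, Pi.add_apply] using this
  by_cases hcop : ∀ u : S4, u ∣ c1 → u ∣ c2 → IsUnit u
  · by_cases hprim : ∀ (u : S4) (ρ' : Fin 4 → S4), ρ' ∈ AR4 f → ρ = u • ρ' → ∃ z : ℂ, u = C z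
    · have hcnu : ¬ IsUnit c := by
        intro hu
        obtain ⟨v, hv⟩ := hu.exists_left_inv
        apply hnspan (v * c1) (v * c2)
        funext i
        simp only [Pi.add_apply, Pi.smul_apply, smul_eq_mul]
        calc ρ i = (v * c) * ρ i := by rw [hv, one_mul]
          _ = v * (c * ρ i) := by ring
          _ = v * (c1 * ρ1 i + c2 * ρ2 i) := by rw [hcomp i]
          _ = v * c1 * ρ1 i + v * c2 * ρ2 i := by ring
      have hqpos : 0 < q := homog_pos_of_not_isUnit hcq hc0 hcnu
      exact ⟨ρ, e, c, c1, c2, q, q1, q2, hAR, hhom, hprim, hcq, hc0, hqpos, hc1h, hc2h,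
        hcop, heqn⟩
    · push_neg at hprim
      obtain ⟨u, ρ', hρ'AR, hρeq, hu⟩ := hprim
      have hu0 : u ≠ 0 := fun h => hρ0 (by rw [hρeq, h, zero_smul])
      have hρ'0 : ρ' ≠ 0 := fun h => hρ0 (by rw [hρeq, h, smul_zero])
      obtain ⟨m, hum, hme⟩ := smul_deg_le hu0 hρ'0 (hρeq ▸ hhom)
      have hm0 : m ≠ 0 := by
        rintro rfl
        obtain ⟨z, hz⟩ := homog_zero_eq_C hum
        exact hu z hz
      have hρ'h : VecHomog ρ' (e - m) := vecHomog_of_smul hu0 hum (hρeq ▸ hhom)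
      have hρ'nspan : ∀ a b : S4, ρ' ≠ a • ρ1 + b • ρ2 := by
        intro a b hab
        apply hnspan (u * a) (u * b)
        rw [hρeq, hab]
        funext i
        simp only [Pi.add_apply, Pi.smul_apply, smul_eq_mul]
        ring
      exact IH (q1 + q2 + (e - m)) (by omega) (e - m) (q + m) q1 q2 ρ' (c * u) c1 c2
        le_rfl hρ'AR hρ'h hρ'nspan (mul_ne_zero hc0 hu0) (hcq.mul hum) hc1h hc2h
        (by rw [mul_smul, ← hρeq]; exact heqn)
  · push_neg at hcop
    obtain ⟨u, hu1, hu2, huu⟩ := hcop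
    have hne : c1 ≠ 0 ∨ c2 ≠ 0 := by
      by_contra h
      push_neg at h
      obtain ⟨h1, h2⟩ := h
      apply hρ0
      funext i
      have := hcomp i
      rw [h1, h2] at this
      simp only [zero_mul, add_zero] at this
      exact (mul_eq_zero.mp this).resolve_left hc0
    have hu0 : u ≠ 0 := by
      rintro rfl
      rcases hne with h | h
      · exact h (zero_dvd_iff.mp hu1)
      · exact h (zero_dvd_iff.mp hu2)
    obtain ⟨p, hpirr, hpu⟩ := WfDvdMonoid.exists_irreducible_factor huu hu0
    have hp : Prime p := UniqueFactorizationMonoid.irreducible_iff_prime.mp hpirr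
    have hp0 : p ≠ 0 := hp.ne_zero
    obtain ⟨d1, hd1⟩ := hpu.trans hu1
    obtain ⟨d2, hd2⟩ := hpu.trans hu2
    have hex : ∃ mp : ℕ, p.IsHomogeneous mp ∧ 0 < mp ∧ (mp ≤ q1 ∨ mp ≤ q2) := by
      rcases hne with h | h
      · have h1' : (p * d1).IsHomogeneous q1 := hd1 ▸ hc1h
        obtain ⟨x, y, hxy, hpx, _⟩ := homog_of_mul h1' (hd1 ▸ h)
        exact ⟨x, hpx, homog_pos_of_not_isUnit hpx hp0 hp.not_unit, Or.inl (by omega)⟩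
      · have h2' : (p * d2).IsHomogeneous q2 := hd2 ▸ hc2h
        obtain ⟨x, y, hxy, hpx, _⟩ := homog_of_mul h2' (hd2 ▸ h)
        exact ⟨x, hpx, homog_pos_of_not_isUnit hpx hp0 hp.not_unit, Or.inr (by omega)⟩
    obtain ⟨mp, hpm, hmp0, hmple⟩ := hex
    have hd1h : d1.IsHomogeneous (q1 - mp) := homog_div hd1 hc1h hpm hp0
    have hd2h : d2.IsHomogeneous (q2 - mp) := homog_div hd2 hc2h hpm hp0
    by_cases hpc : p ∣ c
    · obtain ⟨c', hc'⟩ := hpc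
      have hc'0 : c' ≠ 0 := fun h => hc0 (by rw [hc', h, mul_zero])
      have hc'h : c'.IsHomogeneous (q - mp) := homog_div hc' hcq hpm hp0
      have heqn' : c' • ρ = d1 • ρ1 + d2 • ρ2 := by
        funext i
        simp only [Pi.add_apply, Pi.smul_apply, smul_eq_mul]
        apply mul_left_cancel₀ hp0
        have hh := hcomp i
        rw [hc', hd1, hd2] at hh
        linear_combination hh
      exact IH ((q1 - mp) + (q2 - mp) + e) (by omega) e (q - mp) (q1 - mp) (q2 - mp)
        ρ c' d1 d2 le_rfl hAR hhom hnspan hc'0 hc'h hd1h hd2h heqn'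
    · have hpρ : ∀ i, p ∣ ρ i := by
        intro i
        have hdvd : p ∣ c * ρ i := by
          refine ⟨d1 * ρ1 i + d2 * ρ2 i, ?_⟩
          have hh := hcomp i
          rw [hd1, hd2] at hh
          linear_combination hh
        exact (hp.2.2 c (ρ i) hdvd).resolve_left hpc
      choose ρ' hρ' using hpρ
      have hρeq : ρ = p • ρ' := by
        funext i
        rw [Pi.smul_apply, smul_eq_mul]
        exact hρ' i
      have hρ'0 : ρ' ≠ 0 := fun h => hρ0 (by rw [hρeq, h, smul_zero])
      have hmpe : mp ≤ e := by
        obtain ⟨m', hm', hle⟩ := smul_deg_le hp0 hρ'0 (hρeq ▸ hhom)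
        have : m' = mp := hm'.inj_right hpm hp0
        omega
      have hρ'AR : ρ' ∈ AR4 f := AR4_of_smul_mem hp0 (hρeq ▸ hAR)
      have hρ'h : VecHomog ρ' (e - mp) := vecHomog_of_smul hp0 hpm (hρeq ▸ hhom)
      have hρ'nspan : ∀ a b : S4, ρ' ≠ a • ρ1 + b • ρ2 := by
        intro a b hab
        apply hnspan (p * a) (p * b)
        rw [hρeq, hab]
        funext i
        simp only [Pi.add_apply, Pi.smul_apply, smul_eq_mul]
        ring
      have heqn' : c • ρ' = d1 • ρ1 + d2 • ρ2 := by
        funext i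
        simp only [Pi.add_apply, Pi.smul_apply, smul_eq_mul]
        apply mul_left_cancel₀ hp0
        have hh := hcomp i
        rw [hρ' i, hd1, hd2] at hh
        linear_combination hh
      exact IH ((q1 - mp) + (q2 - mp) + (e - mp)) (by omega) (e - mp) q (q1 - mp) (q2 - mp)
        ρ' c d1 d2 le_rfl hρ'AR hρ'h hρ'nspan hc0 hcq hd1h hd2h heqn'

/-- **Lemma 2.5 (i).** `D : f = 0` fails to be tame with respect to `ρ1, ρ2` exactly when
there is a primitive homogeneous syzygy `ρ` with `c·ρ = c1·ρ1 + c2·ρ2`, where `deg c > 0`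
and `c1, c2` are relatively prime. -/
theorem lem_2_5_i (f : S4) (d e1 e2 : ℕ) (ρ1 ρ2 : Fin 4 → S4)
    (hd : 1 ≤ d) (hf : f.IsHomogeneous d) (hred : Squarefree f)
    (hmin : MinimalPair f ρ1 ρ2 e1 e2) :
    ¬ TamePair f ρ1 ρ2 ↔
      ∃ (ρ : Fin 4 → S4) (e : ℕ) (c c1 c2 : S4) (q q1 q2 : ℕ),
        ρ ∈ AR4 f ∧ VecHomog ρ e ∧
        (∀ (u : S4) (ρ' : Fin 4 → S4), ρ' ∈ AR4 f → ρ = u • ρ' → ∃ z : ℂ, u = C z) ∧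
        c.IsHomogeneous q ∧ c ≠ 0 ∧ 0 < q ∧
        c1.IsHomogeneous q1 ∧ c2.IsHomogeneous q2 ∧
        (∀ u : S4, u ∣ c1 → u ∣ c2 → IsUnit u) ∧
        c • ρ = c1 • ρ1 + c2 • ρ2 := by
  constructor
  · intro hT
    rw [TamePair] at hT
    push_neg at hT
    obtain ⟨ρ, hAR, qd, hhom, hM, hnspan⟩ := hT
    obtain ⟨j, k, hδ⟩ := exists_minor2 f e1 e2 ρ1 ρ2 hmin
    have hcomp := minors_comp ρ1 ρ2 ρ hM j k
    have heqn : (ρ1 j * ρ2 k - ρ1 k * ρ2 j) • ρ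
        = (ρ2 k * ρ j - ρ2 j * ρ k) • ρ1 + (ρ1 j * ρ k - ρ1 k * ρ j) • ρ2 := by
      funext m
      simpa [Pi.add_apply, Pi.smul_apply, smul_eq_mul] using hcomp m
    obtain ⟨h1AR, h1ne, h1h, h1min, h2AR, h2h, h12, h2notmul, h2min⟩ := id hmin
    have hδh : (ρ1 j * ρ2 k - ρ1 k * ρ2 j).IsHomogeneous (e1 + e2) :=
      ((h1h j).mul (h2h k)).sub ((h1h k).mul (h2h j))
    have hc1h : (ρ2 k * ρ j - ρ2 j * ρ k).IsHomogeneous (e2 + qd) :=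
      ((h2h k).mul (hhom j)).sub ((h2h j).mul (hhom k))
    have hc2h : (ρ1 j * ρ k - ρ1 k * ρ j).IsHomogeneous (e1 + qd) :=
      ((h1h j).mul (hhom k)).sub ((h1h k).mul (hhom j))
    exact reduce f ρ1 ρ2 e1 e2 hmin ((e2 + qd) + (e1 + qd) + qd) qd (e1 + e2)
      (e2 + qd) (e1 + qd) ρ _ _ _ le_rfl hAR hhom hnspan hδ hδh hc1h hc2h heqn
  · rintro ⟨ρ, e, c, c1, c2, q, q1, q2, hAR, hhom, hprim, hcq, hc0, hqpos, hc1h, hc2h,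
      hcop, heqn⟩
    intro hT
    have hcomp : ∀ i, c * ρ i = c1 * ρ1 i + c2 * ρ2 i := by
      intro i
      simpa [Pi.add_apply, Pi.smul_apply, smul_eq_mul] using congrFun heqn i
    have hM : MinorsVanish3 ρ1 ρ2 ρ := minorsVanish_of_comb ρ1 ρ2 ρ c c1 c2 hc0 hcomp
    obtain ⟨a, b, hab⟩ := hT ρ hAR e hhom hM
    have h0 : (c1 - c * a) • ρ1 + (c2 - c * b) • ρ2 = 0 := by
      funext i
      have hi := hcomp i
      have habi := congrFun hab i
      simp only [Pi.add_apply, Pi.smul_apply, smul_eq_mul, Pi.zero_apply] at habi ⊢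
      linear_combination c * habi - hi
    obtain ⟨hA, hB⟩ := indep_pair f e1 e2 ρ1 ρ2 hmin _ _ h0
    have hdc1 : c ∣ c1 := ⟨a, by linear_combination hA⟩
    have hdc2 : c ∣ c2 := ⟨b, by linear_combination hB⟩
    exact (not_isUnit_of_homog hcq hc0 hqpos) (hcop c hdc1 hdc2)
end
end

section
/- Let f ∈ ℂ[x,y,z,w] be a reduced homogeneous polynomial defining a free surface D: f = 0 in P³, i.e., AR(f) is a free graded S-module with a homogeneous basis ρ1, ρ2, ρ3 of degrees d1 ≤ d2 ≤ d3. Then D is tame; more precisely, D is tame with respect to ρ1 and ρ2: every homogeneous ρ ∈ AR(f) for which all 3×3 minors of the 3×4 matrix with rows ρ1, ρ2, ρ vanish belongs to S·ρ1 + S·ρ2. -/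
open MvPolynomial Matrix

noncomputable section

lemma aux_det_lin {R : Type*} [CommRing R] (u1 u2 u3 : Fin 3 → R) (a b c : R) :
    (Matrix.of ![u1, u2, a • u1 + b • u2 + c • u3] : Matrix (Fin 3) (Fin 3) R).det
      = c * (Matrix.of ![u1, u2, u3] : Matrix (Fin 3) (Fin 3) R).det := by
  simp only [Matrix.det_fin_three, Matrix.of_apply, Matrix.cons_val', Matrix.cons_val_zero,
    Matrix.cons_val_one, Matrix.head_cons, Matrix.cons_val_two, Matrix.tail_cons,
    Matrix.empty_val', Matrix.cons_val_fin_one, Pi.add_apply, Pi.smul_apply, smul_eq_mul, Matrix.vecHead]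
  ring

lemma aux_minor_ne {K : Type*} [Field K] {v1 v2 v3 : Fin 4 → K}
    (hli : LinearIndependent K ![v1, v2, v3]) :
    ∃ j : Fin 4,
      (Matrix.of fun i k => ![v1, v2, v3] i (j.succAbove k) : Matrix (Fin 3) (Fin 3) K).det ≠ 0 := by
  obtain ⟨j, hj⟩ : ∃ j : Fin 4, (Pi.single j 1 : Fin 4 → K) ∉
      Submodule.span K (Set.range ![v1, v2, v3]) := by
    by_contra h
    push_neg at h
    have htop : Submodule.span K (Set.range ![v1, v2, v3]) = ⊤ := by
      rw [eq_top_iff, ← (Pi.basisFun K (Fin 4)).span_eq, Submodule.span_le]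
      rintro x ⟨j, rfl⟩
      simpa using h j
    have h1 : Module.finrank K (Submodule.span K (Set.range ![v1, v2, v3])) = 3 := by
      simpa using finrank_span_eq_card hli
    rw [htop, finrank_top] at h1
    simp [Module.finrank_pi] at h1
  have hli4 : LinearIndependent K (Fin.cons (Pi.single j 1) ![v1, v2, v3]) :=
    linearIndependent_fin_cons.2 ⟨hli, hj⟩
  set M : Matrix (Fin 4) (Fin 4) K :=
    Matrix.of (Fin.cons (Pi.single j 1) ![v1, v2, v3]) with hM
  have hU : IsUnit M := Matrix.linearIndependent_rows_iff_isUnit.1 hli4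
  have hdet : M.det ≠ 0 := ((Matrix.isUnit_iff_isUnit_det M).1 hU).ne_zero
  refine ⟨j, fun h => hdet ?_⟩
  have hsub : M.submatrix Fin.succ j.succAbove
      = (Matrix.of fun i k => ![v1, v2, v3] i (j.succAbove k) : Matrix (Fin 3) (Fin 3) K) := by
    ext i k
    simp [hM, Matrix.submatrix_apply]
  rw [Matrix.det_succ_row_zero]
  rw [Finset.sum_eq_single j]
  · have : M 0 j = 1 := by simp [hM]
    rw [this, hsub, h]; ring
  · intro j' _ hj'
    have : M 0 j' = 0 := by simp [hM, Pi.single_apply, (Ne.symm hj')]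
    rw [this, mul_zero, zero_mul]
  · intro h'; exact absurd (Finset.mem_univ j) h'


/-- **Proposition 2.6 (i).** Any free surface is tame; more precisely, it is tame with
respect to the first two elements `ρ1, ρ2` of a homogeneous basis of `AR(f)`. -/
theorem prop_2_6_i (f : S4) (d d1 d2 d3 : ℕ) (ρ1 ρ2 ρ3 : Fin 4 → S4)
    (hd : 1 ≤ d) (hf : f.IsHomogeneous d) (hred : Squarefree f)
    (h12 : d1 ≤ d2) (h23 : d2 ≤ d3)
    (hm1 : ρ1 ∈ AR4 f) (hm2 : ρ2 ∈ AR4 f) (hm3 : ρ3 ∈ AR4 f)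
    (hh1 : VecHomog ρ1 d1) (hh2 : VecHomog ρ2 d2) (hh3 : VecHomog ρ3 d3)
    (hgen : ∀ ρ ∈ AR4 f, ∃ a b c : S4, ρ = a • ρ1 + b • ρ2 + c • ρ3)
    (hind : ∀ a b c : S4, a • ρ1 + b • ρ2 + c • ρ3 = 0 → a = 0 ∧ b = 0 ∧ c = 0) :
    TamePair f ρ1 ρ2 := by
  intro ρ hρ q hq hmin
  obtain ⟨a, b, c, hab⟩ := hgen ρ hρ
  refine ⟨a, b, ?_⟩
  suffices hc : c = 0 by rw [hab, hc, zero_smul, add_zero]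
  classical
  set K := FractionRing S4
  let φ : S4 →+* K := algebraMap S4 K
  have hφ : Function.Injective φ := IsFractionRing.injective S4 K
  have hli : LinearIndependent K ![φ ∘ ρ1, φ ∘ ρ2, φ ∘ ρ3] := by
    rw [Fintype.linearIndependent_iff]
    intro g hg
    obtain ⟨t, ht⟩ := IsLocalization.exist_integer_multiples_of_finite
      (nonZeroDivisors S4) g
    choose A hA using ht
    have htne : φ (t : S4) ≠ 0 := by
      intro h0
      exact nonZeroDivisors.coe_ne_zero t (hφ (by simpa using h0))
    have hz : A 0 • ρ1 + A 1 • ρ2 + A 2 • ρ3 = 0 := by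
      funext k
      apply hφ
      have hgk := congrFun hg k
      simp only [Finset.sum_apply, Fin.sum_univ_three, Pi.smul_apply, smul_eq_mul,
        Matrix.cons_val_zero, Matrix.cons_val_one, Matrix.head_cons,
        Matrix.cons_val_two, Matrix.tail_cons, Function.comp_apply, Pi.zero_apply] at hgk
      have e0 : φ (A 0) = φ (t : S4) * g 0 := by
        have := hA 0; rw [Algebra.smul_def] at this; exact this
      have e1 : φ (A 1) = φ (t : S4) * g 1 := by
        have := hA 1; rw [Algebra.smul_def] at this; exact this
      have e2 : φ (A 2) = φ (t : S4) * g 2 := by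
        have := hA 2; rw [Algebra.smul_def] at this; exact this
      have : φ ((A 0 • ρ1 + A 1 • ρ2 + A 2 • ρ3) k)
          = φ (t : S4) * (g 0 * φ (ρ1 k) + g 1 * φ (ρ2 k) + g 2 * φ (ρ3 k)) := by
        simp only [Pi.add_apply, Pi.smul_apply, smul_eq_mul, φ.map_add, φ.map_mul, e0, e1, e2]
        ring
      rw [this, hgk]
      simp
    obtain ⟨h0, h1, h2⟩ := hind _ _ _ hz
    intro i
    have hAi : φ (A i) = φ (t : S4) * g i := by
      have := hA i; rw [Algebra.smul_def] at this; exact this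
    have hAiz : A i = 0 := by fin_cases i <;> assumption
    rw [hAiz, map_zero] at hAi
    exact (mul_eq_zero.mp hAi.symm).resolve_left htne
  obtain ⟨j0, hj0⟩ := aux_minor_ne hli
  have hSminor : (Matrix.of fun i k => ![ρ1, ρ2, ρ3] i (j0.succAbove k) :
      Matrix (Fin 3) (Fin 3) S4).det ≠ 0 := by
    intro h
    apply hj0
    have hmm : (Matrix.of fun i k => ![φ ∘ ρ1, φ ∘ ρ2, φ ∘ ρ3] i (j0.succAbove k) :
        Matrix (Fin 3) (Fin 3) K)
        = φ.mapMatrix (Matrix.of fun i k => ![ρ1, ρ2, ρ3] i (j0.succAbove k)) := by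
      ext i k
      fin_cases i <;> simp
    rw [hmm, ← RingHom.map_det, h, map_zero]
  have hmj := hmin j0
  have hrw : (Matrix.of fun i k => ![ρ1, ρ2, ρ] i (j0.succAbove k) :
      Matrix (Fin 3) (Fin 3) S4)
      = Matrix.of ![(fun k => ρ1 (j0.succAbove k)), (fun k => ρ2 (j0.succAbove k)),
          a • (fun k => ρ1 (j0.succAbove k)) + b • (fun k => ρ2 (j0.succAbove k))
            + c • (fun k => ρ3 (j0.succAbove k))] := by
    ext i k
    fin_cases i <;> simp [hab]
  have hrw3 : (Matrix.of fun i k => ![ρ1, ρ2, ρ3] i (j0.succAbove k) :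
      Matrix (Fin 3) (Fin 3) S4)
      = Matrix.of ![(fun k => ρ1 (j0.succAbove k)), (fun k => ρ2 (j0.succAbove k)),
          (fun k => ρ3 (j0.succAbove k))] := by
    ext i k
    fin_cases i <;> simp
  rw [hrw, aux_det_lin, ← hrw3] at hmj
  exact (mul_eq_zero.mp hmj).resolve_right hSminor
end
end

section
/- Let f ∈ ℂ[x,y,z,w] be a reduced homogeneous polynomial of degree d ≥ 1. Then for any three Jacobian syzygies ρ1, ρ2, ρ3 ∈ AR(f), the polynomial f divides the determinant of the 4×4 matrix M(E,ρ1,ρ2,ρ3) whose first row is (x, y, z, w) and whose remaining three rows are the components of ρ1, ρ2 and ρ3; i.e., there exists h ∈ S with det M(E,ρ1,ρ2,ρ3) = h·f. -/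
open MvPolynomial Matrix

noncomputable section

section Aux

open AddMonoidAlgebra

lemma coeff_pderiv' (f : S4) (i : Fin 4) (m : Fin 4 →₀ ℕ) :
    MvPolynomial.coeff m (pderiv i f) = ((m i : ℂ) + 1) * MvPolynomial.coeff (m + Finsupp.single i 1) f := by
  induction f using MvPolynomial.induction_on' with
  | monomial s a =>
    rw [pderiv_monomial, coeff_monomial, coeff_monomial]
    by_cases h : s = m + Finsupp.single i 1
    · subst h
      rw [add_tsub_cancel_right, if_pos rfl, if_pos rfl, Finsupp.add_apply,
        Finsupp.single_eq_same]
      push_cast; ring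
    · rw [if_neg h, mul_zero]
      by_cases h2 : s - Finsupp.single i 1 = m
      · rw [if_pos h2]
        have hsi : s i = 0 := by
          by_contra hsi
          apply h
          rw [← h2, tsub_add_cancel_of_le]
          rwa [Finsupp.single_le_iff, Nat.one_le_iff_ne_zero]
        simp [hsi]
      · rw [if_neg h2]
  | add p q hp hq => simp [hp, hq, mul_add]


lemma eq_C_of_pderiv_zero {p : S4} (h : ∀ i : Fin 4, pderiv i p = 0) :
    p = C (coeff 0 p) := by
  ext m
  rcases eq_or_ne m 0 with rfl | hm
  · simp
  · obtain ⟨i, hi⟩ : ∃ i, m i ≠ 0 := by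
      by_contra hc
      push_neg at hc
      exact hm (Finsupp.ext fun i => hc i)
    have hle : Finsupp.single i 1 ≤ m := by
      rwa [Finsupp.single_le_iff, Nat.one_le_iff_ne_zero]
    have key := coeff_pderiv' p i (m - Finsupp.single i 1)
    rw [h i, tsub_add_cancel_of_le hle, MvPolynomial.coeff_zero] at key
    have hc0 : coeff m p = 0 := by
      rcases mul_eq_zero.mp key.symm with h' | h'
      · exact absurd h' (Nat.cast_add_one_ne_zero _)
      · exact h'
    rw [hc0, coeff_C, if_neg (fun hh => hm hh.symm)]


abbrev DL : (Fin 4 →₀ ℕ) → Lex (Fin 4 →₀ ℕ) := toLex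

lemma supDeg_mul {p q : S4} (hp : p ≠ 0) (hq : q ≠ 0) :
    supDegree DL (p * q) = supDegree DL p + supDegree DL q := by
  apply supDegree_mul toLex.injective (fun _ _ => rfl) ?_ hp hq
  exact mul_ne_zero ((leadingCoeff_ne_zero toLex.injective).mpr hp)
    ((leadingCoeff_ne_zero toLex.injective).mpr hq)

lemma pderiv_eq_zero_of_self_dvd {p : S4} (hprime : Prime p) (i : Fin 4)
    (hdvd : p ∣ pderiv i p) : pderiv i p = 0 := by
  by_contra hne
  obtain ⟨c, hc⟩ := hdvd
  have hc0 : c ≠ 0 := by rintro rfl; simp at hc; exact hne hc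
  have hp0 : p ≠ 0 := hprime.ne_zero
  -- strict inequality
  have hlt : supDegree DL (pderiv i p) < supDegree DL p := by
    rw [Finset.sup_lt_iff]
    · intro b hb
      have hcb : MvPolynomial.coeff b (pderiv i p) ≠ 0 := by
        exact MvPolynomial.mem_support_iff.mp hb
      rw [coeff_pderiv'] at hcb
      have h2 : MvPolynomial.coeff (b + Finsupp.single i 1) p ≠ 0 := right_ne_zero_of_mul hcb
      have h3 : DL (b + Finsupp.single i 1) ≤ supDegree DL p :=
        Finset.le_sup (MvPolynomial.mem_support_iff.mpr h2)
      refine lt_of_lt_of_le ?_ h3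
      have hblt : b < b + Finsupp.single i 1 := by
        apply lt_add_of_pos_right
        exact pos_iff_ne_zero.mpr (by simp [Finsupp.single_eq_zero])
      exact lt_of_le_of_ne (Finsupp.toLex_monotone hblt.le)
        (fun hh => hblt.ne (toLex.injective hh))
    · -- ⊥ < supDegree DL p
      obtain ⟨m, hm⟩ : ∃ m, MvPolynomial.coeff m (pderiv i p) ≠ 0 := by
        by_contra hc'
        push_neg at hc'
        exact hne (MvPolynomial.ext _ _ (by simpa using hc'))
      rw [coeff_pderiv'] at hm
      have h2 : MvPolynomial.coeff (m + Finsupp.single i 1) p ≠ 0 := right_ne_zero_of_mul hm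
      have h3 : DL (m + Finsupp.single i 1) ≤ supDegree DL p :=
        Finset.le_sup (MvPolynomial.mem_support_iff.mpr h2)
      refine lt_of_lt_of_le ?_ h3
      have hpos : (0 : Fin 4 →₀ ℕ) < m + Finsupp.single i 1 := by
        apply lt_of_lt_of_le (pos_iff_ne_zero.mpr (by simp [Finsupp.single_eq_zero]) : (0 : Fin 4 →₀ ℕ) < Finsupp.single i 1)
        exact le_add_self
      exact lt_of_le_of_ne (Finsupp.toLex_monotone hpos.le)
        (fun hh => hpos.ne (toLex.injective hh))
  have hge : supDegree DL p ≤ supDegree DL (pderiv i p) := by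
    rw [hc, supDeg_mul hp0 hc0]
    exact le_add_of_nonneg_right bot_le
  exact absurd hge (not_le.mpr hlt)

-- Euler relation
lemma euler4 {f : S4} {d : ℕ} (hf : f.IsHomogeneous d) :
    ∑ i : Fin 4, X i * pderiv i f = C (d : ℂ) * f := by
  ext m
  have hterm : ∀ i : Fin 4, coeff m (X i * pderiv i f) = (m i : ℂ) * coeff m f := by
    intro i
    classical
    rw [coeff_X_mul']
    by_cases h : i ∈ m.support
    · rw [if_pos h, coeff_pderiv']
      have hle : Finsupp.single i 1 ≤ m := by
        rw [Finsupp.single_le_iff, Nat.one_le_iff_ne_zero]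
        simpa using h
      rw [tsub_add_cancel_of_le hle]
      congr 1
      have hmi : m i ≠ 0 := by simpa using h
      rw [Finsupp.tsub_apply, Finsupp.single_eq_same]
      norm_cast
      omega
    · rw [if_neg h]
      have hmi : m i = 0 := by simpa using Finsupp.notMem_support_iff.mp h
      rw [hmi]
      simp
  rw [MvPolynomial.coeff_sum]
  simp_rw [hterm]
  rw [← Finset.sum_mul, coeff_C_mul]
  rcases eq_or_ne (coeff m f) 0 with h | h
  · rw [h, mul_zero, mul_zero]
  · congr 1
    have hw := hf h
    rw [Finsupp.weight_apply] at hw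
    have hsum : ∑ i : Fin 4, m i = d := by
      rw [← hw, Finsupp.sum_fintype]
      · simp
      · intro _; rfl
    rw [← hsum]
    push_cast
    rfl

theorem sf_dvd {α : Type*} [CommMonoidWithZero α] [IsCancelMulZero α] [Nontrivial α] [UniqueFactorizationMonoid α]
    {D : α} {f : α} (hsq : Squarefree f) (hdiv : ∀ p, Prime p → p ∣ f → p ∣ D) :
    f ∣ D := by
  induction f using UniqueFactorizationMonoid.induction_on_prime with
  | h₁ => exact absurd hsq not_squarefree_zero
  | h₂ x hx => exact hx.dvd
  | h₃ a p ha hp ih =>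
    have hsa : Squarefree a := hsq.squarefree_of_dvd (dvd_mul_left a p)
    have haD : a ∣ D := ih hsa (fun q hq hqa => hdiv q hq (hqa.trans (dvd_mul_left a p)))
    have hpD : p ∣ D := hdiv p hp (dvd_mul_right p a)
    have hpa : ¬ p ∣ a := by
      intro h
      exact hp.not_unit (hsq p (mul_dvd_mul_left p h))
    obtain ⟨c, rfl⟩ := haD
    rcases hp.dvd_mul.mp hpD with h | h
    · exact absurd h hpa
    · obtain ⟨e, rfl⟩ := h
      exact ⟨e, by rw [← mul_assoc, mul_comm a p]⟩

end Aux

/-- **Remark 3.2.** For any three Jacobian syzygies `ρ1, ρ2, ρ3` of `f`, the polynomial `f`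
divides the determinant of the `4×4` matrix with first row `(x,y,z,w)` and remaining rows
`ρ1, ρ2, ρ3`. -/
theorem rk_saito (f : S4) (d : ℕ)
    (hd : 1 ≤ d) (hf : f.IsHomogeneous d) (hred : Squarefree f) :
    ∀ ρ1 ρ2 ρ3 : Fin 4 → S4, ρ1 ∈ AR4 f → ρ2 ∈ AR4 f → ρ3 ∈ AR4 f →
      ∃ h : S4, (EMat ρ1 ρ2 ρ3).det = h * f := by
  intro ρ1 ρ2 ρ3 h1 h2 h3
  set M := EMat ρ1 ρ2 ρ3 with hM
  set v : Fin 4 → S4 := fun i => pderiv i f with hv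
  have e1 : ∑ i : Fin 4, ρ1 i * pderiv i f = 0 := LinearMap.mem_ker.mp h1
  have e2 : ∑ i : Fin 4, ρ2 i * pderiv i f = 0 := LinearMap.mem_ker.mp h2
  have e3 : ∑ i : Fin 4, ρ3 i * pderiv i f = 0 := LinearMap.mem_ker.mp h3
  have hmul : M.mulVec v = fun r => if r = 0 then C (d : ℂ) * f else 0 := by
    funext r
    fin_cases r
    · simpa [M, EMat, Matrix.mulVec, dotProduct, v] using euler4 hf
    · simpa [M, EMat, Matrix.mulVec, dotProduct, v, Fin.ext_iff] using e1
    · simpa [M, EMat, Matrix.mulVec, dotProduct, v, Fin.ext_iff] using e2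
    · simpa [M, EMat, Matrix.mulVec, dotProduct, v, Fin.ext_iff] using e3
  have hkey : M.adjugate.mulVec (M.mulVec v) = M.det • v := by
    rw [Matrix.mulVec_mulVec, Matrix.adjugate_mul, Matrix.smul_mulVec,
      Matrix.one_mulVec]
  have hadj : ∀ i, M.det * v i = M.adjugate i 0 * (C (d : ℂ) * f) := by
    intro i
    have := congrFun hkey i
    rw [hmul] at this
    simp only [Matrix.mulVec, dotProduct, mul_ite, mul_zero, Pi.smul_apply,
      smul_eq_mul] at this
    rw [← this, Finset.sum_ite_eq' Finset.univ (0 : Fin 4)]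
    simp
  have hdvdi : ∀ i, f ∣ M.det * pderiv i f := by
    intro i
    exact ⟨M.adjugate i 0 * C (d : ℂ), by rw [hadj i]; ring⟩
  have hfD : f ∣ M.det := by
    apply sf_dvd hred
    intro p hp hpf
    by_contra hpD
    obtain ⟨g, hg⟩ := hpf
    have hpg : ¬ p ∣ g := fun h =>
      hp.not_unit (hred p (by rw [hg]; exact mul_dvd_mul_left p h))
    have hpfi : ∀ i, p ∣ pderiv i f := fun i =>
      (hp.dvd_mul.mp (dvd_trans ⟨g, hg⟩ (hdvdi i))).resolve_left hpD
    have hpp : ∀ i : Fin 4, p ∣ pderiv i p := by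
      intro i
      have hthis := hpfi i
      rw [hg, pderiv_mul] at hthis
      have h2 : p ∣ pderiv i p * g :=
        (dvd_add_right (dvd_mul_right p (pderiv i g))).mp (by rwa [add_comm] at hthis)
      exact (hp.dvd_mul.mp h2).resolve_right hpg
    have hz : ∀ i : Fin 4, pderiv i p = 0 := fun i =>
      pderiv_eq_zero_of_self_dvd hp i (hpp i)
    have hpc := eq_C_of_pderiv_zero hz
    rcases eq_or_ne (coeff 0 p) 0 with h0 | h0
    · rw [h0, map_zero] at hpc; exact hp.ne_zero hpc
    · refine hp.not_unit (hpc ▸ IsUnit.of_mul_eq_one (C (coeff 0 p)⁻¹) ?_)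
      rw [← C_mul, mul_inv_cancel₀ h0, C_1]
  obtain ⟨c, hc⟩ := hfD
  exact ⟨c, by rw [hc, mul_comm]⟩
end
end

section
/- Let f ∈ ℂ[x,y,z,w] be a reduced (squarefree) non-constant homogeneous polynomial with partial derivatives f_x, f_y, f_z, f_w. If g = (g₁, g₂, g₃, g₄) ∈ S⁴ satisfies g_i·f_j = g_j·f_i for all pairs of indices i, j ∈ {1,2,3,4} (where (f₁,f₂,f₃,f₄) = (f_x,f_y,f_z,f_w)), then there exists a polynomial h ∈ S with g = h·(f_x, f_y, f_z, f_w). -/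
open MvPolynomial Matrix

noncomputable section

lemma my_coeff_pderiv (i : Fin 4) (p : S4) (u : Fin 4 →₀ ℕ) :
    coeff u (pderiv i p) = coeff (u + Finsupp.single i 1) p * ((u i : ℂ) + 1) := by
  induction p using MvPolynomial.induction_on' with
  | add p q hp hq => simp [hp, hq, add_mul]
  | monomial t c =>
    rw [pderiv_monomial, coeff_monomial, coeff_monomial]
    by_cases h : t = u + Finsupp.single i 1
    · subst h
      rw [if_pos (add_tsub_cancel_right _ _), if_pos rfl]
      push_cast
      simp [Finsupp.add_apply, Finsupp.single_eq_same]
    · rw [if_neg h]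
      by_cases h2 : t - Finsupp.single i 1 = u
      · have hti : t i = 0 := by
          by_contra hti
          exact h (by rw [← h2, tsub_add_cancel_of_le
            (Finsupp.single_le_iff.mpr (Nat.one_le_iff_ne_zero.mpr hti))])
        rw [if_pos h2, hti]
        simp
      · rw [if_neg h2, zero_mul]

lemma my_eq_C_of_pderiv_eq_zero {p : S4} (h : ∀ i, pderiv i p = 0) : ∃ c : ℂ, p = C c := by
  refine ⟨coeff 0 p, ?_⟩
  ext u
  rw [coeff_C]
  by_cases hu : 0 = u
  · rw [if_pos hu, ← hu]
  · rw [if_neg hu]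
    obtain ⟨i, hi⟩ : ∃ i, u i ≠ 0 := by
      by_contra hc
      push_neg at hc
      exact hu (Finsupp.ext fun i => by simp [hc i]).symm
    have key := my_coeff_pderiv i p (u - Finsupp.single i 1)
    rw [h i, coeff_zero] at key
    have hres : (u - Finsupp.single i 1) + Finsupp.single i 1 = u :=
      tsub_add_cancel_of_le (Finsupp.single_le_iff.mpr (Nat.one_le_iff_ne_zero.mpr hi))
    rw [hres] at key
    have hne : ((((u - Finsupp.single i 1) : Fin 4 →₀ ℕ) i : ℂ) + 1) ≠ 0 := by
      have := Nat.cast_add_one_ne_zero (R := ℂ) (((u - Finsupp.single i 1 : Fin 4 →₀ ℕ)) i)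
      push_cast at this ⊢
      exact this
    exact (mul_eq_zero.mp key.symm).resolve_right hne

lemma my_degreeOf_zero_mul {n : ℕ} (p q : MvPolynomial (Fin (n+1)) ℂ) (hp : p ≠ 0) (hq : q ≠ 0) :
    degreeOf 0 (p * q) = degreeOf 0 p + degreeOf 0 q := by
  have hp' : finSuccEquiv ℂ n p ≠ 0 := by
    simpa using (map_ne_zero_iff _ (finSuccEquiv ℂ n).injective).mpr hp
  have hq' : finSuccEquiv ℂ n q ≠ 0 := by
    simpa using (map_ne_zero_iff _ (finSuccEquiv ℂ n).injective).mpr hq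
  rw [← natDegree_finSuccEquiv, _root_.map_mul, Polynomial.natDegree_mul hp' hq',
    natDegree_finSuccEquiv, natDegree_finSuccEquiv]

lemma my_degreeOf_mul (i : Fin 4) {p q : S4} (hp : p ≠ 0) (hq : q ≠ 0) :
    degreeOf i (p * q) = degreeOf i p + degreeOf i q := by
  set e := Equiv.swap (0 : Fin 4) i with he
  have hinj : Function.Injective (e : Fin 4 → Fin 4) := e.injective
  have key : ∀ r : S4, degreeOf 0 (rename e r) = degreeOf i r := by
    intro r
    have := degreeOf_rename_of_injective (p := r) hinj i
    rwa [he, Equiv.swap_apply_right] at this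
  rw [← key, ← key, ← key, _root_.map_mul]
  exact my_degreeOf_zero_mul _ _ ((map_ne_zero_iff _ (rename_injective _ hinj)).mpr hp)
    ((map_ne_zero_iff _ (rename_injective _ hinj)).mpr hq)

lemma my_euler_monomial (s : Fin 4 →₀ ℕ) (c : ℂ) :
    ∑ i : Fin 4, X i * pderiv i (monomial s c) =
      C ((Finsupp.degree s : ℕ) : ℂ) * monomial s c := by
  have hterm : ∀ i : Fin 4, X i * pderiv i (monomial s c) = monomial s (c * s i) := by
    intro i
    rw [pderiv_monomial, X, monomial_mul, one_mul]
    by_cases h : s i = 0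
    · rw [h]; simp
    · congr 2
      rw [add_comm]
      exact tsub_add_cancel_of_le (Finsupp.single_le_iff.mpr (Nat.one_le_iff_ne_zero.mpr h))
  simp only [hterm]
  rw [C_mul_monomial]
  rw [← Finset.sum_congr rfl (fun i _ => rfl)]
  rw [← map_sum (monomial s) (fun i => c * (s i : ℂ)) Finset.univ]
  congr 1
  rw [← Finset.mul_sum, mul_comm]
  congr 1
  have : Finsupp.degree s = ∑ i : Fin 4, s i := by
    rw [Finsupp.degree]
    exact (Finset.sum_subset (Finset.subset_univ s.support) (fun x _ hx =>
      Finsupp.notMem_support_iff.mp hx))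
  rw [this]
  push_cast
  rfl

lemma my_euler {f : S4} {d : ℕ} (hf : f.IsHomogeneous d) :
    ∑ i : Fin 4, X i * pderiv i f = C ((d : ℕ) : ℂ) * f := by
  calc ∑ i : Fin 4, X i * pderiv i f
      = ∑ i : Fin 4, ∑ s ∈ f.support, X i * pderiv i (monomial s (coeff s f)) := by
        refine Finset.sum_congr rfl fun i _ => ?_
        conv_lhs => rw [f.as_sum]
        rw [map_sum, Finset.mul_sum]
    _ = ∑ s ∈ f.support, ∑ i : Fin 4, X i * pderiv i (monomial s (coeff s f)) :=
        Finset.sum_comm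
    _ = ∑ s ∈ f.support, C ((d : ℕ) : ℂ) * monomial s (coeff s f) := by
        refine Finset.sum_congr rfl fun s hs => ?_
        rw [my_euler_monomial]
        congr 2
        have := hf (mem_support_iff.mp hs)
        change Finsupp.weight (fun _ => 1) s = d at this
        rw [← Finsupp.degree_eq_weight_one] at this
        exact_mod_cast congrArg (Nat.cast : ℕ → ℂ) this
    _ = C ((d : ℕ) : ℂ) * f := by rw [← Finset.mul_sum, ← f.as_sum]

lemma my_irred_not_dvd_pderiv {p : S4} (hirr : Irreducible p)
    (h : ∀ i, p ∣ pderiv i p) : False := by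
  by_cases hz : ∀ i, pderiv i p = 0
  · obtain ⟨c, rfl⟩ := my_eq_C_of_pderiv_eq_zero hz
    have hc : c ≠ 0 := by
      rintro rfl
      rw [map_zero] at hirr
      exact not_irreducible_zero hirr
    exact hirr.not_isUnit ((isUnit_iff_ne_zero.mpr hc).map C)
  · push_neg at hz
    obtain ⟨i, hi⟩ := hz
    obtain ⟨m, hm⟩ := h i
    have hm0 : m ≠ 0 := by rintro rfl; rw [mul_zero] at hm; exact hi hm
    have hp0 : p ≠ 0 := hirr.ne_zero
    have h1 : degreeOf i p ≤ degreeOf i (pderiv i p) := by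
      rw [hm, my_degreeOf_mul i hp0 hm0]
      exact Nat.le_add_right _ _
    have hmem : ∀ u ∈ (pderiv i p).support, u i + 1 ≤ degreeOf i p := by
      intro u hu
      have hc := mem_support_iff.mp hu
      rw [my_coeff_pderiv] at hc
      have hc2 : coeff (u + Finsupp.single i 1) p ≠ 0 := left_ne_zero_of_mul hc
      have hle : ((u + Finsupp.single i 1 : Fin 4 →₀ ℕ)) i ≤ degreeOf i p := by
        rw [degreeOf_eq_sup i]
        exact Finset.le_sup (f := fun m => m i) (mem_support_iff.mpr hc2)
      simpa [Finsupp.add_apply, Finsupp.single_eq_same] using hle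
    have h2 : degreeOf i (pderiv i p) < degreeOf i p := by
      obtain ⟨u0, hu0⟩ := (support_nonempty.mpr hi)
      have hpos : 0 < degreeOf i p := lt_of_lt_of_le (Nat.succ_pos _) (hmem u0 hu0)
      rw [degreeOf_eq_sup]
      exact Finset.sup_lt_iff hpos |>.mpr fun u hu => Nat.lt_of_succ_le (hmem u hu)
    omega

/-- **Exactness (3.3) of the Koszul complex at `Ω³`.** For a reduced non-constant
homogeneous `f`, if `g = (g₁,g₂,g₃,g₄)` satisfies `gᵢ·f_j = g_j·fᵢ` for all `i, j`, then
`g` is a polynomial multiple of the gradient `(fₓ, f_y, f_z, f_w)`. -/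
theorem koszul_omega3 (f : S4) (d : ℕ)
    (hd : 1 ≤ d) (hf : f.IsHomogeneous d) (hred : Squarefree f)
    (g : Fin 4 → S4)
    (hminors : ∀ i j : Fin 4, g i * pderiv j f = g j * pderiv i f) :
    ∃ h : S4, g = h • fun i => pderiv i f := by
  classical
  have hf0 : f ≠ 0 := by
    rintro rfl
    simpa using hred 0 (by simp)
  have hd0 : ((d : ℕ) : ℂ) ≠ 0 := Nat.cast_ne_zero.mpr (by omega)
  obtain ⟨j0, hj0⟩ : ∃ j, pderiv j f ≠ 0 := by
    by_contra h
    push_neg at h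
    obtain ⟨c, hc⟩ := my_eq_C_of_pderiv_eq_zero h
    have h2 : f.totalDegree = d := hf.totalDegree hf0
    rw [hc, totalDegree_C] at h2
    omega
  obtain ⟨a, b, c, hab, hca, hcb⟩ :=
    UniqueFactorizationMonoid.exists_reduced_factors' (g j0) (pderiv j0 f) hj0
  have hc0 : c ≠ 0 := by rintro rfl; rw [zero_mul] at hcb; exact hj0 hcb.symm
  have hb0 : b ≠ 0 := by rintro rfl; rw [mul_zero] at hcb; exact hj0 hcb.symm
  have key : ∀ i, g i * b = a * pderiv i f := by
    intro i
    have h := hminors i j0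
    rw [← hca, ← hcb] at h
    apply mul_left_cancel₀ hc0
    linear_combination h
  have hbd : ∀ i, b ∣ pderiv i f := by
    intro i
    have h1 : b ∣ a * pderiv i f := ⟨g i, by rw [← key i]; ring⟩
    exact hab.symm.dvd_of_dvd_mul_left h1
  have hbf : b ∣ f := by
    have h1 : b ∣ C ((d : ℕ) : ℂ) * f := by
      rw [← my_euler hf]
      exact Finset.dvd_sum fun i _ => Dvd.dvd.mul_left (hbd i) _
    obtain ⟨m, hm⟩ := h1
    refine ⟨C (((d : ℕ) : ℂ)⁻¹) * m, ?_⟩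
    have h2 : C (((d : ℕ) : ℂ)⁻¹) * (C ((d : ℕ) : ℂ) * f) = f := by
      rw [← mul_assoc, ← C_mul, inv_mul_cancel₀ hd0, C_1, one_mul]
    rw [← h2, hm]; ring
  have hbu : IsUnit b := by
    by_contra hbu
    obtain ⟨p, hpirr, hpb⟩ := WfDvdMonoid.exists_irreducible_factor hbu hb0
    have hprime : Prime p := UniqueFactorizationMonoid.irreducible_iff_prime.mp hpirr
    obtain ⟨m, hm⟩ := hpb.trans hbf
    by_cases hpm : p ∣ m
    · obtain ⟨m', hm'⟩ := hpm
      exact hpirr.not_isUnit (hred p ⟨m', by rw [hm, hm', mul_assoc]⟩)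
    · refine my_irred_not_dvd_pderiv hpirr fun i => ?_
      have h1 : p ∣ pderiv i f := hpb.trans (hbd i)
      have h2 : pderiv i f = pderiv i p * m + p * pderiv i m := by
        rw [hm, pderiv_mul]
      have h3 : p ∣ pderiv i p * m := by
        have h4 : pderiv i p * m = pderiv i f - p * pderiv i m := by rw [h2]; ring
        rw [h4]
        exact dvd_sub h1 (dvd_mul_right p _)
      exact (hprime.dvd_or_dvd h3).resolve_right hpm
  obtain ⟨u, hu⟩ := hbu
  refine ⟨a * ↑u⁻¹, ?_⟩
  funext i
  have hk := key i
  rw [← hu] at hk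
  have h5 : g i = a * ↑u⁻¹ * pderiv i f := by
    calc g i = g i * ↑u * ↑u⁻¹ := by rw [mul_assoc, Units.mul_inv, mul_one]
    _ = a * pderiv i f * ↑u⁻¹ := by rw [hk]
    _ = a * ↑u⁻¹ * pderiv i f := by ring
  simpa [smul_eq_mul] using h5
end
end

section
/- Let f ∈ ℂ[x,y,z,w] be a reduced homogeneous polynomial of degree d defining a nearly free surface D: f = 0 in P³ with exponents d1 ≤ d2 ≤ d3. Set d'1 = d1, d'2 = d2, d'3 = d3 − 1, s1' = d'1 + d'2 + d'3, s2' = d'1d'2 + d'1d'3 + d'2d'3, s3' = d'1d'2d'3, a' = s1'² − s2' and b' = 2a' − s1'³ + (3/2)·s1'·s2' − (1/2)·s3'. Then for all sufficiently large k one has m(f)_k = a·k + b with a = a' − 1 and b = b' + d + d3 − 3. -/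
open MvPolynomial Matrix

noncomputable section

/-- The leading coefficient `a = s₁² - s₂` of the Hilbert polynomial of a free surface. -/
def freeHilbA (x y z : ℚ) : ℚ := (x + y + z) ^ 2 - (x * y + x * z + y * z)

/-- The constant coefficient `b = 2a - s₁³ + (3/2)s₁s₂ - (1/2)s₃` of the Hilbert polynomial
of a free surface. -/
def freeHilbB (x y z : ℚ) : ℚ :=
  2 * freeHilbA x y z - (x + y + z) ^ 3 +
    (3 / 2) * (x + y + z) * (x * y + x * z + y * z) - (1 / 2) * (x * y * z)


lemma degSet_finite (k : ℕ) : {d : Fin 4 →₀ ℕ | d.degree = k}.Finite :=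
  (Finsupp.finite_of_degree_le k).subset (by intro d hd; simpa using hd.le)

lemma degree_eq_sum (d : Fin 4 →₀ ℕ) : d.degree = d.sum fun _ => id := by
  simp [Finsupp.degree, Finsupp.sum]
  rfl

noncomputable def degSetEquivSym (k : ℕ) :
    {d : Fin 4 →₀ ℕ | d.degree = k} ≃ Sym (Fin 4) k where
  toFun d := ⟨(d : Fin 4 →₀ ℕ).toMultiset, by
    rw [Finsupp.card_toMultiset, ← degree_eq_sum]; exact d.2⟩
  invFun m := ⟨(m : Multiset (Fin 4)).toFinsupp, by
    have := Finsupp.card_toMultiset ((m : Multiset (Fin 4)).toFinsupp)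
    rw [Multiset.toFinsupp_toMultiset] at this
    show Finsupp.degree _ = k
    rw [degree_eq_sum, ← this]; exact m.2⟩
  left_inv d := by ext1; simp
  right_inv m := by ext1; simp

noncomputable def homogLinEquiv (k : ℕ) :
    haveI := (degSet_finite k).fintype
    (homogeneousSubmodule (Fin 4) ℂ k) ≃ₗ[ℂ] ({d : Fin 4 →₀ ℕ | d.degree = k} → ℂ) :=
  haveI := (degSet_finite k).fintype
  ((LinearEquiv.ofEq _ _ (homogeneousSubmodule_eq_finsupp_supported (Fin 4) ℂ k)).trans
      (AddMonoidAlgebra.supportedEquivFinsupp _)).trans (Finsupp.linearEquivFunOnFinite ℂ ℂ _)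

lemma finrank_homog (k : ℕ) :
    Module.finrank ℂ (homogeneousSubmodule (Fin 4) ℂ k) = (k + 3).choose 3 := by
  haveI := (degSet_finite k).fintype
  rw [(homogLinEquiv k).finrank_eq, Module.finrank_fintype_fun_eq_card,
    Fintype.card_congr (degSetEquivSym k), Sym.card_sym_eq_choose]
  rw [show Fintype.card (Fin 4) + k - 1 = k + 3 by simp; omega]
  have h := Nat.choose_symm (Nat.le_add_right k 3)
  rw [show k + 3 - k = 3 by omega] at h
  rw [← h]

instance homogFD (k : ℕ) : FiniteDimensional ℂ (homogeneousSubmodule (Fin 4) ℂ k) := by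
  haveI := (degSet_finite k).fintype
  exact Module.Finite.equiv (homogLinEquiv k).symm


lemma degree_sub_single {s : Fin 4 →₀ ℕ} {i : Fin 4} (h : s i ≠ 0) :
    (s - Finsupp.single i 1).degree = s.degree - 1 := by
  have hs : (s - Finsupp.single i 1) + Finsupp.single i 1 = s := by
    ext j
    rcases eq_or_ne j i with rfl | hj
    · simp [Finsupp.single_apply]; omega
    · simp [Finsupp.single_apply, hj.symm, Ne.symm hj]
  have h1 : (Finsupp.single i 1 : Fin 4 →₀ ℕ).degree = 1 := by
    exact Finsupp.degree_single i 1
  have hadd : ∀ a b : Fin 4 →₀ ℕ, (a + b).degree = a.degree + b.degree := by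
    intro a b
    simp [Finsupp.degree_eq_weight_one, map_add]
  have := congrArg Finsupp.degree hs
  rw [hadd, h1] at this
  omega

lemma pderiv_isHomogeneous {f : S4} {n : ℕ} (hf : f.IsHomogeneous n) (i : Fin 4) :
    (pderiv i f).IsHomogeneous (n - 1) := by
  rw [f.as_sum, map_sum]
  apply IsHomogeneous.sum
  intro s hs
  rw [pderiv_monomial]
  rcases eq_or_ne (s i) 0 with h | h
  · simp [h]
    exact isHomogeneous_zero _ _ _
  · apply isHomogeneous_monomial
    have hd : s.degree = n := by
      rw [Finsupp.degree_eq_weight_one]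
      exact hf (mem_support_iff.mp hs)
    rw [degree_sub_single h, hd]

lemma comp_self {p : S4} {m : ℕ} (hp : p ∈ homogeneousSubmodule (Fin 4) ℂ m) :
    homogeneousComponent m p = p := by
  rw [homogeneousComponent_of_mem hp, if_pos rfl]

lemma homogComp_mul {b g : S4} {e : ℕ} (hg : g.IsHomogeneous e) (n : ℕ) :
    homogeneousComponent (n + e) (b * g) = homogeneousComponent n b * g := by
  conv_lhs => rw [← sum_homogeneousComponent b, Finset.sum_mul, map_sum]
  have key : ∀ i, homogeneousComponent (n + e) (homogeneousComponent i b * g)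
      = if i = n then homogeneousComponent i b * g else 0 := by
    intro i
    rw [homogeneousComponent_of_mem ((homogeneousComponent_isHomogeneous i b).mul hg)]
    congr 1
    simp only [eq_iff_iff]
    omega
  rw [Finset.sum_congr rfl fun i _ => key i, Finset.sum_ite_eq' _ n]
  split_ifs with hn
  · rfl
  · rw [homogeneousComponent_eq_zero, zero_mul]
    simpa using hn


lemma finrank_map_add_inf {M N : Type*} [AddCommGroup M] [Module ℂ M] [AddCommGroup N]
    [Module ℂ N] (L : M →ₗ[ℂ] N) (W : Submodule ℂ M) [FiniteDimensional ℂ W] :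
    Module.finrank ℂ (W.map L) + Module.finrank ℂ ↥(W ⊓ LinearMap.ker L)
      = Module.finrank ℂ W := by
  have h := LinearMap.finrank_range_add_finrank_ker (L.domRestrict W)
  rw [LinearMap.range_domRestrict, LinearMap.ker_domRestrict] at h
  have e1 : (LinearMap.ker L).comap W.subtype = (W ⊓ LinearMap.ker L).comap W.subtype := by
    rw [Submodule.comap_inf, Submodule.comap_subtype_self, top_inf_eq]
  rw [e1, (Submodule.comapSubtypeEquivOfLe (inf_le_left :
    W ⊓ LinearMap.ker L ≤ W)).finrank_eq] at h
  exact h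

/-- inclusion of a pi-type of submodules -/
noncomputable def piIncl (p : Fin 4 → Submodule ℂ S4) :
    (∀ i, ↥(p i)) →ₗ[ℂ] (Fin 4 → S4) :=
  LinearMap.pi fun i => (p i).subtype.comp (LinearMap.proj i)

lemma piIncl_inj (p : Fin 4 → Submodule ℂ S4) : Function.Injective (piIncl p) := by
  intro c c' h
  funext i
  exact Subtype.ext (congrFun h i)

lemma piIncl_range (p : Fin 4 → Submodule ℂ S4) :
    LinearMap.range (piIncl p) = Submodule.pi Set.univ p := by
  ext x
  constructor
  · rintro ⟨c, rfl⟩ i _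
    exact (c i).2
  · intro hx
    exact ⟨fun i => ⟨x i, hx i trivial⟩, rfl⟩

lemma finrank_pi_submodule (p : Fin 4 → Submodule ℂ S4) [∀ i, FiniteDimensional ℂ (p i)] :
    Module.finrank ℂ ↥(Submodule.pi Set.univ p) = ∑ i, Module.finrank ℂ (p i) := by
  rw [← piIncl_range, LinearMap.finrank_range_of_inj (piIncl_inj p),
    Module.finrank_pi_fintype]

instance pi_submodule_fd (p : Fin 4 → Submodule ℂ S4) [∀ i, FiniteDimensional ℂ (p i)] :
    FiniteDimensional ℂ ↥(Submodule.pi Set.univ p) := by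
  rw [← piIncl_range]
  exact Module.Finite.range (piIncl p)

lemma cast_choose1 (m : ℕ) : ((m + 1).choose 1 : ℚ) = m + 1 := by
  simp
lemma cast_choose2 (m : ℕ) : ((m + 2).choose 2 : ℚ) * 2 = (m + 1) * (m + 2) := by
  induction m with
  | zero => norm_num
  | succ m ih =>
    have h : (m + 3).choose 2 = (m + 2).choose 1 + (m + 2).choose 2 :=
      Nat.choose_succ_succ (m + 2) 1
    rw [show m + 1 + 2 = m + 3 by omega]
    push_cast [h, Nat.choose_one_right]
    push_cast at ih
    linarith
lemma cast_choose3 (m : ℕ) : ((m + 3).choose 3 : ℚ) * 6 = (m + 1) * (m + 2) * (m + 3) := by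
  induction m with
  | zero => norm_num
  | succ m ih =>
    have h : (m + 4).choose 3 = (m + 3).choose 2 + (m + 3).choose 3 :=
      Nat.choose_succ_succ (m + 3) 2
    have h2 := cast_choose2 (m + 1)
    rw [show m + 1 + 2 = m + 3 by omega] at h2
    rw [show m + 1 + 3 = m + 4 by omega]
    push_cast [h]
    push_cast at ih h2
    nlinarith [ih, h2]


/-- Auxiliary: the map `b ↦ ∑ i, b i • ρ i`, as a `ℂ`-linear map. -/
def sumSmul (ρ : Fin 4 → Fin 4 → S4) : (Fin 4 → S4) →ₗ[ℂ] (Fin 4 → S4) where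
  toFun b := ∑ i, b i • ρ i
  map_add' b b' := by simp [add_smul, Finset.sum_add_distrib]
  map_smul' c b := by
    simp only [Pi.smul_apply, RingHom.id_apply, smul_assoc]
    rw [← Finset.smul_sum]

/-- Auxiliary: the map `c ↦ (c * a i)ᵢ`, as a `ℂ`-linear map. -/
def mulVecA (a : Fin 4 → S4) : S4 →ₗ[ℂ] (Fin 4 → S4) where
  toFun c := fun i => c * a i
  map_add' x y := by funext i; simp [add_mul]
  map_smul' c x := by funext i; simp [Algebra.smul_mul_assoc]

/-- **Formula (2.4).** For a nearly free surface with exponents `d1 ≤ d2 ≤ d3`, the Hilbert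
polynomial of the Milnor algebra is `a·k + b` with `a = a' - 1` and `b = b' + d + d3 - 3`,
where `a', b'` are computed by the free-surface formulas from `d1, d2, d3 - 1`. -/
theorem nearly_free_hilbert_polynomial (f : S4) (d d1 d2 d3 : ℕ)
    (hd : 1 ≤ d) (hf : f.IsHomogeneous d) (hred : Squarefree f)
    (hnf : IsNearlyFreeWith f d d1 d2 d3) :
    ∃ N : ℕ, ∀ k : ℕ, N ≤ k →
      (milnor4 f k : ℚ) =
        (freeHilbA d1 d2 ((d3 : ℚ) - 1) - 1) * k +
          (freeHilbB d1 d2 ((d3 : ℚ) - 1) + d + d3 - 3) := by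
  classical
  obtain ⟨h12, h23, hsum, ρ, a, hρmem, hρh0, hρh1, hρh2, hρh3, hgen,
    hah0, hah1, hah2, hah3, hane, hrel, hsyz⟩ := hnf
  -- degree vectors
  set e : Fin 4 → ℕ := ![d1, d2, d3, d3] with he
  set ε : Fin 4 → ℕ := ![d3 - d1 + 1, d3 - d2 + 1, 1, 1] with hε
  have hρ : ∀ i, VecHomog (ρ i) (e i) := by
    intro i; fin_cases i <;> simpa [he] using (by assumption : VecHomog _ _)
  have hah : ∀ i, (a i).IsHomogeneous (ε i) := by
    intro i; fin_cases i <;> simpa [hε] using (by assumption : MvPolynomial.IsHomogeneous _ _)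
  refine ⟨d + 2 * d3 + 2, fun k hk => ?_⟩
  set q : ℕ := k - d + 1 with hqdef
  have hq1 : q + (d - 1) = k := by omega
  have hqd3 : d3 + 2 ≤ q := by omega
  have hdeg1 : ∀ i, q - e i + e i = q := by
    intro i; fin_cases i <;> simp [he] <;> omega
  have hdeg2 : ∀ i, (q - d3 - 1) + ε i = q - e i := by
    intro i; fin_cases i <;> simp [he, hε] <;> omega
  -- notation
  set J' : Submodule ℂ S4 := (JacIdeal f).restrictScalars ℂ with hJ'
  set L : (Fin 4 → S4) →ₗ[ℂ] S4 := (jacPair f).restrictScalars ℂ with hL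
  set Ψ : (Fin 4 → S4) →ₗ[ℂ] (Fin 4 → S4) := sumSmul ρ with hΨ
  set Θ : S4 →ₗ[ℂ] (Fin 4 → S4) := mulVecA a with hΘ
  set W1 : Submodule ℂ (Fin 4 → S4) :=
    Submodule.pi Set.univ (fun _ => homogeneousSubmodule (Fin 4) ℂ q) with hW1
  set W2 : Submodule ℂ (Fin 4 → S4) :=
    Submodule.pi Set.univ (fun i => homogeneousSubmodule (Fin 4) ℂ (q - e i)) with hW2
  have hpd : ∀ i : Fin 4, (pderiv i f).IsHomogeneous (d - 1) :=
    fun i => pderiv_isHomogeneous hf i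
  -- Equation 1
  have n1 : milnor4 f k +
      Module.finrank ℂ ↥(homogeneousSubmodule (Fin 4) ℂ k ⊓ J') = (k + 3).choose 3 := by
    rw [← finrank_homog k]
    have := finrank_map_add_inf (Submodule.mkQ J') (homogeneousSubmodule (Fin 4) ℂ k)
    rw [Submodule.ker_mkQ] at this
    exact this
  -- Equation 2 : image of the jacobian map
  have hmap1 : W1.map L = homogeneousSubmodule (Fin 4) ℂ k ⊓ J' := by
    ext x
    constructor
    · rintro ⟨b, hb, rfl⟩
      have hLb : L b = ∑ i, b i * pderiv i f := rfl
      constructor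
      · rw [hLb]
        apply Submodule.sum_mem
        intro i _
        rw [mem_homogeneousSubmodule, ← hq1]
        exact ((mem_homogeneousSubmodule _ _).mp (hb i trivial)).mul (hpd i)
      · rw [hLb]
        show _ ∈ JacIdeal f
        apply Ideal.sum_mem
        intro i _
        exact Ideal.mul_mem_left _ _ (Ideal.subset_span ⟨i, rfl⟩)
    · rintro ⟨hx1, hx2⟩
      have hx2' : x ∈ Ideal.span (Set.range fun i : Fin 4 => pderiv i f) := hx2
      rw [Ideal.span, Submodule.mem_span_range_iff_exists_fun] at hx2'
      obtain ⟨c, hc⟩ := hx2'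
      refine ⟨fun i => homogeneousComponent q (c i), fun i _ => ?_, ?_⟩
      · exact (mem_homogeneousSubmodule _ _).mpr (homogeneousComponent_isHomogeneous q (c i))
      · have : L (fun i => homogeneousComponent q (c i))
            = ∑ i, homogeneousComponent q (c i) * pderiv i f := rfl
        rw [this]
        calc ∑ i, homogeneousComponent q (c i) * pderiv i f
            = ∑ i, homogeneousComponent (q + (d - 1)) (c i * pderiv i f) := by
              refine Finset.sum_congr rfl fun i _ => ?_
              rw [homogComp_mul (hpd i)]
          _ = homogeneousComponent (q + (d - 1)) (∑ i, c i * pderiv i f) := by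
              rw [map_sum]
          _ = homogeneousComponent k x := by
              have hcx : (∑ i, c i * pderiv i f) = x := by
                simpa [smul_eq_mul] using hc
              rw [hq1, hcx]
          _ = x := comp_self hx1
  have hker1 : W1 ⊓ LinearMap.ker L = ARgr f q := by
    rw [ARgr, hL, LinearMap.ker_restrictScalars, inf_comm]
    rfl
  have n2 : Module.finrank ℂ ↥(homogeneousSubmodule (Fin 4) ℂ k ⊓ J') + arDim f q
      = 4 * (q + 3).choose 3 := by
    have h := finrank_map_add_inf L W1
    rw [hmap1, hker1] at h
    rw [arDim, h, hW1, finrank_pi_submodule]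
    simp [finrank_homog]
  -- Equation 3 : image of the syzygy map
  have hΨapp : ∀ (b : Fin 4 → S4) (j : Fin 4), Ψ b j = ∑ i, b i * ρ i j := by
    intro b j
    show (∑ i, b i • ρ i) j = _
    rw [Finset.sum_apply]
    simp [smul_eq_mul]
  have hmap2 : W2.map Ψ = ARgr f q := by
    ext σ
    constructor
    · rintro ⟨b, hb, rfl⟩
      constructor
      · show Ψ b ∈ AR4 f
        show (∑ i, b i • ρ i) ∈ AR4 f
        exact Submodule.sum_mem _ fun i _ => Submodule.smul_mem _ _ (hρmem i)
      · intro j _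
        show Ψ b j ∈ homogeneousSubmodule (Fin 4) ℂ q
        rw [hΨapp b j]
        apply Submodule.sum_mem
        intro i _
        rw [mem_homogeneousSubmodule, ← hdeg1 i]
        exact ((mem_homogeneousSubmodule _ _).mp (hb i trivial)).mul (hρ i j)
    · rintro ⟨hσ1, hσ2⟩
      obtain ⟨b, hb⟩ := hgen σ hσ1
      refine ⟨fun i => homogeneousComponent (q - e i) (b i), fun i _ => ?_, ?_⟩
      · exact (mem_homogeneousSubmodule _ _).mpr (homogeneousComponent_isHomogeneous _ _)
      · funext j
        rw [hΨapp]
        have hσj : σ j = ∑ i, b i * ρ i j := by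
          rw [hb, Finset.sum_apply]
          simp [smul_eq_mul]
        calc ∑ i, homogeneousComponent (q - e i) (b i) * ρ i j
            = ∑ i, homogeneousComponent q (b i * ρ i j) := by
              refine Finset.sum_congr rfl fun i _ => ?_
              have h' := homogComp_mul (hρ i j) (b := b i) (q - e i)
              rw [hdeg1 i] at h'
              exact h'.symm
          _ = homogeneousComponent q (σ j) := by rw [← map_sum, ← hσj]
          _ = σ j := comp_self (hσ2 j trivial)
  have n3 : arDim f q + Module.finrank ℂ ↥(W2 ⊓ LinearMap.ker Ψ)
      = (q - d1 + 3).choose 3 + (q - d2 + 3).choose 3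
        + (q - d3 + 3).choose 3 + (q - d3 + 3).choose 3 := by
    have h := finrank_map_add_inf Ψ W2
    rw [hmap2] at h
    rw [arDim, h, hW2, finrank_pi_submodule, Fin.sum_univ_four]
    simp [he, finrank_homog]
  -- Equation 4 : kernel of the syzygy map
  obtain ⟨j0, hj0⟩ : ∃ j, a j ≠ 0 := Function.ne_iff.mp hane
  have hΘinj : Function.Injective Θ := by
    rw [← LinearMap.ker_eq_bot, Submodule.eq_bot_iff]
    intro c hc
    have := congrFun (LinearMap.mem_ker.mp hc) j0
    simp only [hΘ, mulVecA, LinearMap.coe_mk, AddHom.coe_mk, Pi.zero_apply] at this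
    rcases mul_eq_zero.mp this with h | h
    · exact h
    · exact absurd h hj0
  have hmap3 : (homogeneousSubmodule (Fin 4) ℂ (q - d3 - 1)).map Θ
      = W2 ⊓ LinearMap.ker Ψ := by
    ext x
    constructor
    · rintro ⟨c, hc, rfl⟩
      have hΘc : ∀ i, Θ c i = c * a i := fun i => rfl
      constructor
      · intro i _
        show Θ c i ∈ homogeneousSubmodule (Fin 4) ℂ (q - e i)
        rw [hΘc i, mem_homogeneousSubmodule, ← hdeg2 i]
        exact ((mem_homogeneousSubmodule _ _).mp hc).mul (hah i)
      · show (∑ i, (c * a i) • ρ i) = 0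
        calc (∑ i, (c * a i) • ρ i) = c • ∑ i, a i • ρ i := by
              rw [Finset.smul_sum]
              exact Finset.sum_congr rfl fun i _ => mul_smul c (a i) (ρ i)
          _ = 0 := by rw [hrel, smul_zero]
    · rintro ⟨hb1, hb2⟩
      have hb2' : (∑ i, x i • ρ i) = 0 := hb2
      obtain ⟨c, hc⟩ := hsyz x hb2'
      have hxi : ∀ i, x i = c * a i := by
        intro i
        have := congrFun hc i
        simpa [smul_eq_mul] using this
      refine ⟨homogeneousComponent (q - d3 - 1) c,
        (mem_homogeneousSubmodule _ _).mpr (homogeneousComponent_isHomogeneous _ _), ?_⟩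
      funext i
      show homogeneousComponent (q - d3 - 1) c * a i = x i
      rw [← homogComp_mul (hah i), hdeg2 i, ← hxi i]
      exact comp_self (hb1 i trivial)
  have n4 : Module.finrank ℂ ↥(W2 ⊓ LinearMap.ker Ψ) = (q - d3 - 1 + 3).choose 3 := by
    rw [← hmap3, ← (Submodule.equivMapOfInjective Θ hΘinj
      (homogeneousSubmodule (Fin 4) ℂ (q - d3 - 1))).finrank_eq, finrank_homog]
  -- Cast to ℚ and finish
  have c1 := congrArg (Nat.cast (R := ℚ)) n1
  have c2 := congrArg (Nat.cast (R := ℚ)) n2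
  have c3 := congrArg (Nat.cast (R := ℚ)) n3
  have c4 := congrArg (Nat.cast (R := ℚ)) n4
  push_cast at c1 c2 c3 c4
  have t0 := cast_choose3 k
  have t1 := cast_choose3 q
  have t2 := cast_choose3 (q - d1)
  have t3 := cast_choose3 (q - d2)
  have t4 := cast_choose3 (q - d3)
  have t5 := cast_choose3 (q - d3 - 1)
  have hD : (d : ℚ) = (d1 : ℚ) + d2 + d3 := by exact_mod_cast hsum.symm
  have r0 : (q : ℚ) = (k : ℚ) - ((d1 : ℚ) + d2 + d3) + 1 := by
    rw [hqdef, Nat.cast_add, Nat.cast_sub (show d ≤ k by omega), hD]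
    norm_num
  have r1 : ((q - d1 : ℕ) : ℚ) = (q : ℚ) - d1 := Nat.cast_sub (by omega)
  have r2 : ((q - d2 : ℕ) : ℚ) = (q : ℚ) - d2 := Nat.cast_sub (by omega)
  have r3 : ((q - d3 : ℕ) : ℚ) = (q : ℚ) - d3 := Nat.cast_sub (by omega)
  have r4 : ((q - d3 - 1 : ℕ) : ℚ) = (q : ℚ) - d3 - 1 := by
    rw [Nat.cast_sub (show 1 ≤ q - d3 by omega), r3]
    norm_num
  rw [r1, r0] at t2
  rw [r2, r0] at t3
  rw [r3, r0] at t4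
  rw [r4, r0] at t5
  rw [r0] at t1
  rw [hD]
  simp only [freeHilbA, freeHilbB]
  linear_combination c1 - c2 + c3 - c4 + (t0 - 4 * t1 + t2 + t3 + 2 * t4 - t5) / 6
end
end
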